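/- arXiv:1405.3606 — 15 statements merged into one kernel-verified Lean document; each statement's English description precedes it below -/
import Mathlib

section
/- For a function F : X* → Y the following are equivalent: (i) F is unarily quasi-range-idempotent (ran(F₁) = ran(F^♭)); (ii) there exists an ε-standard operation H : X* → X ∪ {ε} such that F(x) = F₁(H(x)) for every nonempty x ∈ X* (i.e., F^♭ = F₁ ∘ H^♭); (iii) there exist a unarily idempotent ε-standard operation H : X* → X ∪ {ε} and a function f : X → Y such that F^♭ = f ∘ H^♭. Moreover, in case (iii) one necessarily has f = F₁, and in (ii) one may choose H^♭ = g ∘ F^♭ for any quasi-inverse g of F₁, and this H is then unarily range-idempotent. -/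
/-! Variadic functions on tuples (modeled as lists). -/

variable {X Y Y' : Type*}

/-- A variadic function `F` is *standard* if `F x = F []` only for `x = []`. -/
def VStandard (F : List X → Y) : Prop := ∀ x : List X, F x = F [] → x = []

/-- An operation `F : X* → X ∪ {ε}` is *ε-standard* if it is standard and `F ε = ε`. -/
def VEpsStandard (F : List X → Option X) : Prop := VStandard F ∧ F [] = none

/-- `F` is *associative*: `F (x, y, z) = F (x, F y, z)`, where inserting the value `F y`
means inserting the one-element tuple if `F y ∈ X` and nothing if `F y = ε`. -/
def VAssoc (F : List X → Option X) : Prop :=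
  ∀ x y z : List X, F (x ++ y ++ z) = F (x ++ (F y).toList ++ z)

/-- `F` is *preassociative*: `F y = F y'` implies `F (x ++ y ++ z) = F (x ++ y' ++ z)`. -/
def VPreassoc (F : List X → Y) : Prop :=
  ∀ x y y' z : List X, F y = F y' → F (x ++ y ++ z) = F (x ++ y' ++ z)

/-- The range of the unary part `F₁` of `F`. -/
def VRanUnary (F : List X → Y) : Set Y := Set.range fun a : X => F [a]

/-- The range of `F^♭`, the restriction of `F` to nonempty tuples. -/
def VRanFlat (F : List X → Y) : Set Y := {y | ∃ x : List X, x ≠ [] ∧ F x = y}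

/-- `F` is *unarily quasi-range-idempotent*: `ran F₁ = ran F^♭`. -/
def VUnQRI (F : List X → Y) : Prop := VRanUnary F = VRanFlat F

/-- An operation `F` is *unarily range-idempotent*: `F (F x) = F x` for nonempty `x`,
with the convention for inserting values into tuples. -/
def VUnRI (F : List X → Option X) : Prop :=
  ∀ x : List X, x ≠ [] → F (F x).toList = F x

/-- `g` is a *quasi-inverse* of `f`. -/
def VQuasiInv (f : X → Y) (g : Y → X) : Prop :=
  (∀ y ∈ Set.range f, f (g y) = y) ∧ g '' Set.range f = Set.range g

/-- The set of elements of `X` attained by an operation `H` on nonempty tuples. -/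
def VRanFlatOp (H : List X → Option X) : Set X :=
  {a : X | ∃ x : List X, x ≠ [] ∧ H x = some a}

/-- An operation `F` is *range-idempotent* if `F (k·y) = y` for every `y ∈ ran F^♭ ∩ X`
and every `k ≥ 1`. -/
def VRangeIdem (F : List X → Option X) : Prop :=
  ∀ y : X, some y ∈ VRanFlat F → ∀ k : ℕ, 1 ≤ k → F (List.replicate k y) = some y

/-- The ternary median in a chain. -/
def med3 {Z : Type*} [LinearOrder Z] (x y z : Z) : Z :=
  min (min (max x y) (max y z)) (max z x)

theorem stmt1 [Nonempty X] [Nonempty Y] (F : List X → Y) :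
    -- (i) ↔ (ii)
    (VUnQRI F ↔
      ∃ H : List X → Option X, VEpsStandard H ∧
        ∀ x : List X, x ≠ [] → F x = F (H x).toList)
    ∧
    -- (i) ↔ (iii)
    (VUnQRI F ↔
      ∃ H : List X → Option X, VEpsStandard H ∧ (∀ a : X, H [a] = some a) ∧
        ∃ f : X → Y, ∀ x : List X, x ≠ [] → ∃ a : X, H x = some a ∧ F x = f a)
    ∧
    -- in case (iii), necessarily f = F₁
    (∀ (H : List X → Option X) (f : X → Y), VEpsStandard H → (∀ a : X, H [a] = some a) →
      (∀ x : List X, x ≠ [] → ∃ a : X, H x = some a ∧ F x = f a) →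
      f = fun a : X => F [a])
    ∧
    -- in (ii) one may choose H^♭ = g ∘ F^♭ for any quasi-inverse g of F₁,
    -- and this H is unarily range-idempotent
    (VUnQRI F → ∀ g : Y → X, VQuasiInv (fun a : X => F [a]) g →
      ∀ H : List X → Option X, H [] = none →
        (∀ x : List X, x ≠ [] → H x = some (g (F x))) →
        VEpsStandard H ∧ (∀ x : List X, x ≠ [] → F x = F (H x).toList) ∧ VUnRI H) := by
  classical
  -- key: from VUnQRI, every nonempty x has a with F [a] = F x
  have key : VUnQRI F → ∀ x : List X, x ≠ [] → ∃ a : X, F [a] = F x := by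
    intro h x hx
    have : F x ∈ VRanFlat F := ⟨x, hx, rfl⟩
    rw [← h] at this
    exact this
  refine ⟨?_, ?_, ?_, ?_⟩
  · constructor
    · intro h
      refine ⟨fun x => if hx : x = [] then none else some ((key h x hx).choose), ⟨?_, ?_⟩, ?_⟩
      · intro x hx
        by_contra hne
        simp [hne] at hx
      · simp
      · intro x hx
        simp only [dif_neg hx, Option.toList_some]
        exact ((key h x hx).choose_spec).symm
    · rintro ⟨H, ⟨hstd, hnone⟩, hF⟩
      apply Set.eq_of_subset_of_subset
      · rintro y ⟨a, rfl⟩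
        exact ⟨[a], by simp, rfl⟩
      · rintro y ⟨x, hx, rfl⟩
        have hHx : H x ≠ none := fun h => hx (hstd x (h.trans hnone.symm))
        obtain ⟨a, ha⟩ := Option.ne_none_iff_exists'.mp hHx
        exact ⟨a, by simp [hF x hx, ha]⟩
  · constructor
    · intro h
      refine ⟨fun x => match x with
        | [] => none
        | [a] => some a
        | x => if hx : x = [] then none else some ((key h x hx).choose), ⟨?_, ?_⟩, ?_, ?_⟩
      · intro x hx
        match x with
        | [] => rfl
        | [a] => simp at hx
        | a :: b :: t => simp at hx
      · rfl
      · intro a; rfl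
      · refine ⟨fun a => F [a], ?_⟩
        intro x hx
        match x with
        | [a] => exact ⟨a, rfl, rfl⟩
        | a :: b :: t =>
          refine ⟨(key h (a :: b :: t) (by simp)).choose, by simp, ?_⟩
          exact ((key h (a :: b :: t) (by simp)).choose_spec).symm
    · rintro ⟨H, ⟨hstd, hnone⟩, hun, f, hF⟩
      have hfF : ∀ a : X, f a = F [a] := by
        intro a
        obtain ⟨b, hb, hb2⟩ := hF [a] (by simp)
        rw [hun a] at hb
        cases hb
        exact hb2.symm
      apply Set.eq_of_subset_of_subset
      · rintro y ⟨a, rfl⟩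
        exact ⟨[a], by simp, rfl⟩
      · rintro y ⟨x, hx, rfl⟩
        obtain ⟨a, _, ha2⟩ := hF x hx
        exact ⟨a, by rw [ha2, hfF]⟩
  · intro H f _ hun hF
    funext a
    obtain ⟨b, hb, hb2⟩ := hF [a] (by simp)
    rw [hun a] at hb
    cases hb
    exact hb2.symm
  · intro h g ⟨hg1, _⟩ H hHnil hHx
    have hFF : ∀ x : List X, x ≠ [] → F [g (F x)] = F x := by
      intro x hx
      have hm : F x ∈ VRanUnary F := by rw [h]; exact ⟨x, hx, rfl⟩
      exact hg1 (F x) hm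
    refine ⟨⟨?_, hHnil⟩, ?_, ?_⟩
    · intro x hx
      by_contra hne
      rw [hHx x hne, hHnil] at hx
      simp at hx
    · intro x hx
      rw [hHx x hx]
      exact (hFF x hx).symm
    · intro x hx
      rw [hHx x hx]
      simp only [Option.toList_some]
      rw [hHx [g (F x)] (by simp), hFF x hx]
end

section
/- Let F : X* → X ∪ {ε} be an operation with F(ε) = ε. The following are equivalent: (i) F is associative, i.e., F(x, y, z) = F(x, F(y), z) for all x, y, z ∈ X*; (ii) for all x, y, z, x', y', z' ∈ X* such that x ++ y ++ z = x' ++ y' ++ z', one has F(x, F(y), z) = F(x', F(y'), z'); (iii) for all x, y ∈ X*, F(x ++ y) = F(F(x), F(y)). -/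
/-! Variadic functions on tuples (modeled as lists). -/

variable {X Y Y' : Type*}

theorem stmt2 [Nonempty X] (F : List X → Option X) (h : F [] = none) :
    -- (i) ↔ (ii)
    (VAssoc F ↔
      ∀ x y z x' y' z' : List X, x ++ y ++ z = x' ++ y' ++ z' →
        F (x ++ (F y).toList ++ z) = F (x' ++ (F y').toList ++ z'))
    ∧
    -- (i) ↔ (iii)
    (VAssoc F ↔
      ∀ x y : List X, F (x ++ y) = F ((F x).toList ++ (F y).toList)) := by
  constructor
  · constructor
    · intro hA x y z x' y' z' he
      rw [← hA, he, hA]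
    · intro h2 x y z
      have key := h2 x y z x [] (y ++ z) (by simp)
      simp only [h, Option.toList_none, List.append_nil, List.nil_append] at key
      rw [key, List.append_assoc]
  · constructor
    · intro hA x y
      have h1 : F (x ++ y) = F ((F x).toList ++ y) := by
        have := hA [] x y; simpa using this
      have h2 : F ((F x).toList ++ y) = F ((F x).toList ++ (F y).toList) := by
        have := hA (F x).toList y []; simpa using this
      rw [h1, h2]
    · intro h3 x y z
      have hy : F ((F y).toList) = F y := by
        have := h3 y []; simp [h] at this; exact this.symm
      have l1 : F (x ++ (F y).toList) = F (x ++ y) := by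
        rw [h3 x (F y).toList, hy, ← h3 x y]
      calc F (x ++ y ++ z) = F ((F (x ++ y)).toList ++ (F z).toList) := h3 _ _
        _ = F ((F (x ++ (F y).toList)).toList ++ (F z).toList) := by rw [l1]
        _ = F (x ++ (F y).toList ++ z) := (h3 _ _).symm
end

section
/- A function F : X* → Y is preassociative if and only if for all x, x', y, y' ∈ X*, F(x) = F(x') and F(y) = F(y') together imply F(x ++ y) = F(x' ++ y'). -/
/-! Variadic functions on tuples (modeled as lists). -/

variable {X Y Y' : Type*}

theorem stmt3 [Nonempty X] [Nonempty Y] (F : List X → Y) :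
    VPreassoc F ↔
      ∀ x x' y y' : List X, F x = F x' → F y = F y' → F (x ++ y) = F (x' ++ y') := by
  constructor
  · intro h x x' y y' hx hy
    calc F (x ++ y) = F ([] ++ x ++ y) := by simp
    _ = F ([] ++ x' ++ y) := h [] x x' y hx
    _ = F (x' ++ y ++ []) := by simp
    _ = F (x' ++ y' ++ []) := h x' y y' [] hy
    _ = F (x' ++ y') := by simp
  · intro h x y y' z hy
    have h1 : F (x ++ y) = F (x ++ y') := h x x y y' rfl hy
    have h2 := h (x ++ y) (x ++ y') z z h1 rfl
    simpa [List.append_assoc] using h2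
end

section
/- An ε-standard operation F : X* → X ∪ {ε} is associative if and only if it is preassociative and unarily range-idempotent (i.e., F₁ ∘ F^♭ = F^♭). -/
/-! Variadic functions on tuples (modeled as lists). -/

variable {X Y Y' : Type*}

theorem stmt4 [Nonempty X] (F : List X → Option X) (hF : VEpsStandard F) :
    VAssoc F ↔ VPreassoc F ∧ VUnRI F := by
  constructor
  · intro hA
    refine ⟨fun x y y' z h => ?_, fun x _ => ?_⟩
    · rw [hA x y z, h, ← hA x y' z]
    · have := hA [] x []
      simp only [List.nil_append, List.append_nil] at this
      exact this.symm
  · rintro ⟨hP, hR⟩ x y z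
    rcases eq_or_ne y [] with rfl | hy
    · simp [hF.2]
    · exact hP x y _ z (hR y hy).symm
end

section
/- Let F : X* → Y be a preassociative standard function and let g : Y → Y' be a function whose restriction to ran(F^♭) is one-to-one. Then for any a ∈ Y' \ g(ran(F^♭)), the function H : X* → Y' defined by H(ε) = a and H(x) = g(F(x)) for nonempty x is standard and preassociative. -/
/-! Variadic functions on tuples (modeled as lists). -/

variable {X Y Y' : Type*}

theorem stmt5 [Nonempty X] [Nonempty Y] [Nonempty Y'] (F : List X → Y)
    (hS : VStandard F) (hP : VPreassoc F)
    (g : Y → Y') (hg : Set.InjOn g (VRanFlat F))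
    (a : Y') (ha : a ∉ g '' VRanFlat F)
    (H : List X → Y') (hH0 : H [] = a)
    (hHf : ∀ x : List X, x ≠ [] → H x = g (F x)) :
    VStandard H ∧ VPreassoc H := by
  have hmem : ∀ x : List X, x ≠ [] → F x ∈ VRanFlat F := fun x hx => ⟨x, hx, rfl⟩
  constructor
  · intro x hx
    by_contra hne
    rw [hHf x hne, hH0] at hx
    exact ha ⟨F x, hmem x hne, hx⟩
  · intro x y y' z hyy'
    rcases eq_or_ne y [] with rfl | hy
    · rcases eq_or_ne y' [] with rfl | hy'
      · rfl
      · rw [hH0, hHf y' hy'] at hyy'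
        exact absurd ⟨F y', hmem y' hy', hyy'.symm⟩ ha
    · rcases eq_or_ne y' [] with rfl | hy'
      · rw [hH0, hHf y hy] at hyy'
        exact absurd ⟨F y, hmem y hy, hyy'⟩ ha
      · rw [hHf y hy, hHf y' hy'] at hyy'
        have hF : F y = F y' := hg (hmem y hy) (hmem y' hy') hyy'
        have h1 : x ++ y ++ z ≠ [] := by simp [hy]
        have h2 : x ++ y' ++ z ≠ [] := by simp [hy']
        rw [hHf _ h1, hHf _ h2, hP x y y' z hF]
end

section
/- Let F : X* → Y be a function and consider: (i) F is preassociative and unarily quasi-range-idempotent; (ii) there exist an associative ε-standard operation H : X* → X ∪ {ε} and a one-to-one function f : ran(H^♭) → Y such that F^♭ = f ∘ H^♭. Then (i) implies (ii), and if F is standard then (ii) implies (i). Moreover, if (ii) holds, then F^♭ = F₁ ∘ H^♭ and f = F₁ restricted to ran(H^♭), and one may choose H^♭ = g ∘ F^♭ for any quasi-inverse g of F₁. -/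
/-! Variadic functions on tuples (modeled as lists). -/

variable {X Y Y' : Type*}

theorem vassoc_self {H : List X → Option X} (hA : VAssoc H) (x : List X) :
    H (H x).toList = H x := by
  have h := hA [] x []
  simpa using h.symm

theorem auxA [Nonempty X] (F : List X → Y) (hpre : VPreassoc F) (hqri : VUnQRI F)
    (g : Y → X) (hg : ∀ y ∈ VRanUnary F, F [g y] = y)
    (H : List X → Option X) (hH0 : H [] = none)
    (hH : ∀ x : List X, x ≠ [] → H x = some (g (F x))) :
    VEpsStandard H ∧ VAssoc H ∧
      Set.InjOn (fun a : X => F [a]) (VRanFlatOp H) ∧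
      ∀ x : List X, x ≠ [] → ∃ a : X, H x = some a ∧ F x = F [a] := by
  have key : ∀ x : List X, x ≠ [] → F [g (F x)] = F x := by
    intro x hx
    apply hg
    rw [hqri]
    exact ⟨x, hx, rfl⟩
  refine ⟨⟨?_, hH0⟩, ?_, ?_, ?_⟩
  · intro x hx
    by_contra hne
    rw [hH x hne, hH0] at hx
    exact Option.some_ne_none _ hx
  · intro x y z
    by_cases hy : y = []
    · subst hy; simp [hH0]
    · rw [hH y hy]
      have h1 : x ++ y ++ z ≠ [] := by simp [hy]
      have h2 : x ++ [g (F y)] ++ z ≠ [] := by simp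
      simp only [Option.toList_some]
      rw [hH _ h1, hH _ h2]
      congr 2
      exact hpre x y [g (F y)] z (key y hy).symm
  · rintro a ⟨x, hx, hxa⟩ b ⟨x', hx', hx'b⟩ hab
    rw [hH x hx, Option.some_inj] at hxa
    rw [hH x' hx', Option.some_inj] at hx'b
    subst hxa; subst hx'b
    simp only at hab
    rw [key x hx, key x' hx'] at hab
    rw [hab]
  · intro x hx
    exact ⟨g (F x), hH x hx, (key x hx).symm⟩

theorem stmt6 [Nonempty X] [Nonempty Y] (F : List X → Y) :
    -- (i) ⇒ (ii)
    ((VPreassoc F ∧ VUnQRI F) →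
      ∃ (H : List X → Option X) (f : X → Y), VEpsStandard H ∧ VAssoc H ∧
        Set.InjOn f (VRanFlatOp H) ∧
        ∀ x : List X, x ≠ [] → ∃ a : X, H x = some a ∧ F x = f a)
    ∧
    -- if F is standard, (ii) ⇒ (i)
    (VStandard F →
      (∃ (H : List X → Option X) (f : X → Y), VEpsStandard H ∧ VAssoc H ∧
        Set.InjOn f (VRanFlatOp H) ∧
        ∀ x : List X, x ≠ [] → ∃ a : X, H x = some a ∧ F x = f a) →
      VPreassoc F ∧ VUnQRI F)
    ∧
    -- if (ii) holds, then F^♭ = F₁ ∘ H^♭ and f = F₁ on ran(H^♭)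
    (∀ (H : List X → Option X) (f : X → Y), VEpsStandard H → VAssoc H →
      Set.InjOn f (VRanFlatOp H) →
      (∀ x : List X, x ≠ [] → ∃ a : X, H x = some a ∧ F x = f a) →
      (∀ x : List X, x ≠ [] → F x = F (H x).toList) ∧
      (∀ a ∈ VRanFlatOp H, f a = F [a]))
    ∧
    -- one may choose H^♭ = g ∘ F^♭ for any quasi-inverse g of F₁
    ((VPreassoc F ∧ VUnQRI F) → ∀ g : Y → X, VQuasiInv (fun a : X => F [a]) g →
      ∀ H : List X → Option X, H [] = none →
        (∀ x : List X, x ≠ [] → H x = some (g (F x))) →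
        VEpsStandard H ∧ VAssoc H ∧
          Set.InjOn (fun a : X => F [a]) (VRanFlatOp H) ∧
          ∀ x : List X, x ≠ [] → ∃ a : X, H x = some a ∧ F x = F [a]) := by

  -- common fact used in parts 2 and 3
  have hfix : ∀ (H : List X → Option X) (f : X → Y), VAssoc H →
      (∀ x : List X, x ≠ [] → ∃ a : X, H x = some a ∧ F x = f a) →
      ∀ x : List X, x ≠ [] → ∀ a : X, H x = some a → H [a] = some a ∧ F [a] = f a := by
    intro H f hA hFf x hx a ha
    have h1 : H (H x).toList = H x := vassoc_self hA x
    rw [ha] at h1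
    simp only [Option.toList_some] at h1
    have h2 : H [a] = some a := h1
    obtain ⟨b, hb, hFb⟩ := hFf [a] (by simp)
    rw [h2, Option.some_inj] at hb
    subst hb
    exact ⟨h2, hFb⟩
  refine ⟨?_, ?_, ?_, ?_⟩
  · -- (i) ⇒ (ii)
    rintro ⟨hpre, hqri⟩
    classical
    set g : Y → X := fun y =>
      if h : ∃ a : X, F [a] = y then h.choose else Classical.arbitrary X with hgdef
    have hg : ∀ y ∈ VRanUnary F, F [g y] = y := by
      intro y hy
      obtain ⟨a, ha⟩ := hy
      have h : ∃ a : X, F [a] = y := ⟨a, ha⟩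
      simp only [hgdef, dif_pos h]
      exact h.choose_spec
    refine ⟨fun x => if x = [] then none else some (g (F x)), fun a => F [a], ?_⟩
    exact auxA F hpre hqri g hg _ (by simp) (fun x hx => by simp [hx])
  · -- standard F, (ii) ⇒ (i)
    rintro hstd ⟨H, f, ⟨hHs, hH0⟩, hA, hinj, hFf⟩
    constructor
    · intro x y y' z hyy'
      by_cases hy : y = []
      · by_cases hy' : y' = []
        · subst hy; subst hy'; rfl
        · subst hy
          exact absurd (hstd y' hyy'.symm) hy'
      · by_cases hy' : y' = []
        · subst hy'
          exact absurd (hstd y hyy') hy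
        · obtain ⟨a, ha, hFa⟩ := hFf y hy
          obtain ⟨a', ha', hFa'⟩ := hFf y' hy'
          have haa : a = a' := by
            apply hinj ⟨y, hy, ha⟩ ⟨y', hy', ha'⟩
            show f a = f a'
            rw [← hFa, ← hFa', hyy']
          subst haa
          have hH1 := hA x y z
          have hH2 := hA x y' z
          rw [ha] at hH1
          rw [ha'] at hH2
          have hHeq : H (x ++ y ++ z) = H (x ++ y' ++ z) := by rw [hH1, hH2]
          obtain ⟨b, hb, hFb⟩ := hFf (x ++ y ++ z) (by simp [hy])
          obtain ⟨b', hb', hFb'⟩ := hFf (x ++ y' ++ z) (by simp [hy'])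
          rw [hHeq, hb'] at hb
          rw [Option.some_inj] at hb
          subst hb
          rw [hFb, hFb']
    · ext y
      constructor
      · rintro ⟨a, ha⟩
        exact ⟨[a], by simp, ha⟩
      · rintro ⟨x, hx, hFx⟩
        obtain ⟨a, ha, hFa⟩ := hFf x hx
        have h := hfix H f hA hFf x hx a ha
        exact ⟨a, by show F [a] = y; rw [h.2, ← hFa, hFx]⟩
  · -- (ii) ⇒ F^♭ = F₁ ∘ H^♭ and f = F₁ on ran H^♭
    intro H f hes hA hinj hFf
    constructor
    · intro x hx
      obtain ⟨a, ha, hFa⟩ := hFf x hx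
      have h := hfix H f hA hFf x hx a ha
      rw [ha]
      simp only [Option.toList_some]
      rw [h.2, hFa]
    · rintro a ⟨x, hx, ha⟩
      exact (hfix H f hA hFf x hx a ha).2.symm
  · -- H^♭ = g ∘ F^♭ for a quasi-inverse g of F₁
    rintro ⟨hpre, hqri⟩ g hqi H hH0 hH
    exact auxA F hpre hqri g (fun y hy => hqi.1 y hy) H hH0 hH
end

section
/- If F : X* → X ∪ {ε} is an associative ε-standard operation and its unary part F₁ is one-to-one, then F₁ = id, i.e., F((x)) = x for every x ∈ X. -/
/-! Variadic functions on tuples (modeled as lists). -/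

variable {X Y Y' : Type*}

theorem stmt7 [Nonempty X] (F : List X → Option X) (hF : VEpsStandard F)
    (hA : VAssoc F) (h1 : Function.Injective fun a : X => F [a]) :
    ∀ a : X, F [a] = some a := by
  intro a
  obtain ⟨b, hb⟩ : ∃ b, F [a] = some b := by
    rcases h : F [a] with _ | b
    · exact absurd (hF.1 [a] (h.trans hF.2.symm)) (by simp)
    · exact ⟨b, rfl⟩
  have key := hA [] [a] []
  simp only [List.nil_append, List.append_nil, hb, Option.toList_some] at key
  have : b = a := h1 (key.symm.trans hb.symm)
  rw [hb, this]
end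

section
/- Let F₁ : X → X and F₂ : X² → X be operations. There exists an associative ε-standard operation G : X* → X ∪ {ε} whose unary part is F₁ and whose binary part is F₂ if and only if: (i) F₁ ∘ F₁ = F₁ and F₁ ∘ F₂ = F₂; (ii) F₂(x, y) = F₂(F₁(x), y) = F₂(x, F₁(y)) for all x, y ∈ X; and (iii) F₂ is associative. Moreover, such a G is unique and is determined by Gₙ(x₁, …, xₙ) = G₂(G_{n−1}(x₁, …, x_{n−1}), xₙ) for all n ≥ 3. -/
/-! Variadic functions on tuples (modeled as lists). -/

variable {X Y Y' : Type*}

section Aux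

variable {X : Type*}

/-- Step function for the canonical fold. -/
def gstep (F₂ : X → X → X) : Option X → X → Option X
  | none, a => some a
  | some c, a => some (F₂ c a)

/-- Plain fold of a list over `gstep`. -/
def gfold (F₂ : X → X → X) (l : List X) : Option X := l.foldl (gstep F₂) none

/-- Canonical variadic extension. -/
def Gcanon (F₁ : X → X) (F₂ : X → X → X) (l : List X) : Option X := (gfold F₂ l).map F₁

lemma gfold_some (F₂ : X → X → X) (d : X) (l : List X) :
    l.foldl (gstep F₂) (some d) = some (l.foldl F₂ d) := by
  induction l generalizing d with
  | nil => rfl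
  | cons a t ih => simpa [gstep] using ih (F₂ d a)

lemma gfold_cons (F₂ : X → X → X) (a : X) (l : List X) :
    gfold F₂ (a :: l) = some (l.foldl F₂ a) := by
  simpa [gfold, gstep] using gfold_some F₂ a l

lemma foldl_assoc2 {F₂ : X → X → X} (hA : ∀ a b c, F₂ (F₂ a b) c = F₂ a (F₂ b c))
    (d a : X) (l : List X) : l.foldl F₂ (F₂ d a) = F₂ d (l.foldl F₂ a) := by
  induction l generalizing a with
  | nil => rfl
  | cons b t ih => simpa [hA] using ih (F₂ a b)

end Aux

theorem stmt8 [Nonempty X] (F₁ : X → X) (F₂ : X → X → X) :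
    -- existence iff the three conditions
    ((∃ G : List X → Option X, VEpsStandard G ∧ VAssoc G ∧
        (∀ a : X, G [a] = some (F₁ a)) ∧ (∀ a b : X, G [a, b] = some (F₂ a b))) ↔
      ((∀ a : X, F₁ (F₁ a) = F₁ a) ∧ (∀ a b : X, F₁ (F₂ a b) = F₂ a b) ∧
        (∀ a b : X, F₂ a b = F₂ (F₁ a) b ∧ F₂ a b = F₂ a (F₁ b)) ∧
        (∀ a b c : X, F₂ (F₂ a b) c = F₂ a (F₂ b c))))
    ∧
    -- uniqueness
    (∀ G G' : List X → Option X,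
      (VEpsStandard G ∧ VAssoc G ∧
        (∀ a : X, G [a] = some (F₁ a)) ∧ (∀ a b : X, G [a, b] = some (F₂ a b))) →
      (VEpsStandard G' ∧ VAssoc G' ∧
        (∀ a : X, G' [a] = some (F₁ a)) ∧ (∀ a b : X, G' [a, b] = some (F₂ a b))) →
      G = G')
    ∧
    -- determination: Gₙ(x₁,…,xₙ) = G₂(G_{n-1}(x₁,…,x_{n-1}), xₙ) for n ≥ 3
    (∀ G : List X → Option X,
      (VEpsStandard G ∧ VAssoc G ∧
        (∀ a : X, G [a] = some (F₁ a)) ∧ (∀ a b : X, G [a, b] = some (F₂ a b))) →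
      ∀ (l : List X) (x : X), 2 ≤ l.length →
        G (l ++ [x]) = G ((G l).toList ++ [x])) := by
  have key2 : ∀ G : List X → Option X, VAssoc G →
      (∀ a b : X, G [a, b] = some (F₂ a b)) →
      ∀ (l : List X) (c : X), G l = some c → ∀ a : X, G (l ++ [a]) = some (F₂ c a) := by
    intro G hA h2 l c hc a
    have e := hA [] l [a]
    simp only [List.nil_append, hc, Option.toList_some] at e
    rw [e]
    exact h2 c a
  refine ⟨?_, ?_, ?_⟩
  · constructor
    · rintro ⟨G, ⟨hstd, heps⟩, hA, h1, h2⟩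
      refine ⟨?_, ?_, ?_, ?_⟩
      · intro a
        have e := hA [] [a] []
        simp only [List.nil_append, List.append_nil, h1, Option.toList_some] at e
        exact (Option.some_inj.mp e).symm
      · intro a b
        have e := hA [] [a, b] []
        simp only [List.nil_append, List.append_nil, h2, Option.toList_some, h1] at e
        exact (Option.some_inj.mp e).symm
      · intro a b
        constructor
        · have e := hA [] [a] [b]
          simp only [List.nil_append, h1, Option.toList_some] at e
          have : G [a, b] = G [F₁ a, b] := by simpa using e
          rw [h2, h2] at this
          exact Option.some_inj.mp this
        · have e := hA [a] [b] []
          simp only [List.nil_append, List.append_nil, h1, Option.toList_some] at e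
          have : G [a, b] = G [a, F₁ b] := by simpa using e
          rw [h2, h2] at this
          exact Option.some_inj.mp this
      · intro a b c
        have e1 := hA [] [a, b] [c]
        simp only [List.nil_append, h2, Option.toList_some] at e1
        have e1' : G [a, b, c] = G [F₂ a b, c] := by simpa using e1
        have e2 := hA [a] [b, c] []
        simp only [List.nil_append, List.append_nil, h2, Option.toList_some] at e2
        have e2' : G [a, b, c] = G [a, F₂ b c] := by simpa using e2
        rw [h2] at e1'
        rw [h2] at e2'
        exact Option.some_inj.mp (e1'.symm.trans e2')
    · rintro ⟨h1, h2, h3, hAs⟩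
      refine ⟨Gcanon F₁ F₂, ⟨?_, rfl⟩, ?_, ?_, ?_⟩
      · intro x hx
        cases x with
        | nil => rfl
        | cons a t =>
          exfalso
          rw [Gcanon, gfold_cons] at hx
          simp [Gcanon, gfold] at hx
      · intro x y z
        cases y with
        | nil => simp [Gcanon, gfold]
        | cons a ys =>
          set c := ys.foldl F₂ a with hc
          have hy : Gcanon F₁ F₂ (a :: ys) = some (F₁ c) := by
            rw [Gcanon, gfold_cons]; rfl
          rw [hy]
          simp only [Gcanon, gfold, List.foldl_append, Option.toList_some]
          cases hx : (List.foldl (gstep F₂) none x) with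
          | none =>
            have hl : List.foldl (gstep F₂) none (a :: ys) = some c := gfold_cons F₂ a ys
            rw [hl]
            show ((List.foldl (gstep F₂) (some c) z).map F₁) =
              ((List.foldl (gstep F₂) (gstep F₂ none (F₁ c)) z).map F₁)
            simp only [gstep, gfold_some]
            cases z with
            | nil => simp [h1]
            | cons w zs =>
              simp only [List.foldl_cons]
              rw [(h3 c w).1]
          | some d =>
            have hl : List.foldl (gstep F₂) (some d) (a :: ys) = some (F₂ d c) := by
              rw [gfold_some]
              simp only [List.foldl_cons]
              rw [foldl_assoc2 hAs]
            rw [hl]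
            show ((List.foldl (gstep F₂) (some (F₂ d c)) z).map F₁) =
              ((List.foldl (gstep F₂) (gstep F₂ (some d) (F₁ c)) z).map F₁)
            simp only [gstep]
            rw [← (h3 d c).2]
      · intro a
        simp [Gcanon, gfold, gstep]
      · intro a b
        simp [Gcanon, gfold, gstep, h2]
  · rintro G G' ⟨⟨hstd, heps⟩, hA, h1, h2⟩ ⟨⟨hstd', heps'⟩, hA', h1', h2'⟩
    funext l
    induction l using List.reverseRecOn with
    | nil => rw [heps, heps']
    | append_singleton l a ih =>
      cases l with
      | nil => simp [h1, h1']
      | cons b t =>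
        have hne : G (b :: t) ≠ none := by
          intro hn
          exact (List.cons_ne_nil b t) (hstd _ (hn.trans heps.symm))
        obtain ⟨c, hc⟩ := Option.ne_none_iff_exists'.mp hne
        have hc' : G' (b :: t) = some c := ih ▸ hc
        rw [key2 G hA h2 _ c hc a, key2 G' hA' h2' _ c hc' a]
  · rintro G ⟨⟨hstd, heps⟩, hA, h1, h2⟩ l x _
    simpa using hA [] l [x]
end

section
/- Let F₁ : X → X and F₂ : X² → X be operations. There exists an associative ε-standard operation G : X* → X ∪ {ε} with one-to-one unary part such that G₁ = F₁ and G₂ = F₂ if and only if F₁ = id and F₂ is associative. Moreover, such a G is unique and is determined by Gₙ(x₁, …, xₙ) = G₂(G_{n−1}(x₁, …, x_{n−1}), xₙ) for all n ≥ 3. -/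
/-! Variadic functions on tuples (modeled as lists). -/

variable {X Y Y' : Type*}

private def myG (F₂ : X → X → X) : List X → Option X
  | [] => none
  | a :: l => some (l.foldl F₂ a)

private lemma foldl_assoc {F₂ : X → X → X}
    (hA : ∀ a b c : X, F₂ (F₂ a b) c = F₂ a (F₂ b c)) :
    ∀ (l : List X) (c a : X), l.foldl F₂ (F₂ c a) = F₂ c (l.foldl F₂ a) := by
  intro l
  induction l with
  | nil => intro c a; rfl
  | cons d l ih =>
    intro c a
    simp only [List.foldl_cons, hA, ih]

theorem stmt9 [Nonempty X] (F₁ : X → X) (F₂ : X → X → X) :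
    -- existence iff F₁ = id and F₂ associative
    ((∃ G : List X → Option X, VEpsStandard G ∧ VAssoc G ∧
        Function.Injective (fun a : X => G [a]) ∧
        (∀ a : X, G [a] = some (F₁ a)) ∧ (∀ a b : X, G [a, b] = some (F₂ a b))) ↔
      (F₁ = id ∧ ∀ a b c : X, F₂ (F₂ a b) c = F₂ a (F₂ b c)))
    ∧
    -- uniqueness
    (∀ G G' : List X → Option X,
      (VEpsStandard G ∧ VAssoc G ∧ Function.Injective (fun a : X => G [a]) ∧
        (∀ a : X, G [a] = some (F₁ a)) ∧ (∀ a b : X, G [a, b] = some (F₂ a b))) →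
      (VEpsStandard G' ∧ VAssoc G' ∧ Function.Injective (fun a : X => G' [a]) ∧
        (∀ a : X, G' [a] = some (F₁ a)) ∧ (∀ a b : X, G' [a, b] = some (F₂ a b))) →
      G = G')
    ∧
    -- determination
    (∀ G : List X → Option X,
      (VEpsStandard G ∧ VAssoc G ∧ Function.Injective (fun a : X => G [a]) ∧
        (∀ a : X, G [a] = some (F₁ a)) ∧ (∀ a b : X, G [a, b] = some (F₂ a b))) →
      ∀ (l : List X) (x : X), 2 ≤ l.length →
        G (l ++ [x]) = G ((G l).toList ++ [x])) := by
  refine ⟨?_, ?_, ?_⟩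
  · constructor
    · rintro ⟨G, ⟨hstd, hnil⟩, hassoc, hinj, h1, h2⟩
      constructor
      · funext a
        have h := hassoc [] [a] []
        simp [h1 a] at h
        exact hinj (a₁ := F₁ a) (a₂ := a) (by simpa using h.symm.trans (h1 a).symm)
      · intro a b c
        have e1 : G [a, b, c] = some (F₂ (F₂ a b) c) := by
          have h := hassoc [] [a, b] [c]
          simp [h2 a b] at h
          exact h.trans (h2 _ _)
        have e2 : G [a, b, c] = some (F₂ a (F₂ b c)) := by
          have h := hassoc [a] [b, c] []
          simp [h2 b c] at h
          exact h.trans (h2 _ _)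
        have := e1.symm.trans e2
        exact Option.some_injective _ this
    · rintro ⟨h1, hA⟩
      refine ⟨myG F₂, ⟨?_, rfl⟩, ?_, ?_, ?_, ?_⟩
      · intro x hx
        cases x with
        | nil => rfl
        | cons a l => simp [myG] at hx
      · intro x y z
        cases y with
        | nil => rfl
        | cons a l =>
          cases x with
          | nil =>
            simp [myG, List.foldl_append]
          | cons b x' =>
            simp [myG, List.foldl_append, foldl_assoc hA]
      · intro a b h
        simpa [myG] using h
      · intro a; simp [myG, h1]
      · intro a b; simp [myG]
  · rintro G G' ⟨⟨hstd, hnil⟩, hassoc, _, h1, h2⟩ ⟨⟨hstd', hnil'⟩, hassoc', _, h1', h2'⟩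
    funext l
    induction l using List.reverseRecOn with
    | nil => rw [hnil, hnil']
    | append_singleton l x ih =>
      cases l with
      | nil => simp [h1 x, h1' x]
      | cons a m =>
        have hne : G (a :: m) ≠ none := by
          intro h
          have := hstd (a :: m) (h.trans hnil.symm)
          simp at this
        obtain ⟨c, hc⟩ := Option.ne_none_iff_exists'.mp hne
        have hc' : G' (a :: m) = some c := by rw [← ih]; exact hc
        have e1 : G ((a :: m) ++ [x]) = some (F₂ c x) := by
          have := hassoc [] (a :: m) [x]
          simp only [List.nil_append, hc, Option.toList_some] at this
          rw [this]; exact h2 c x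
        have e2 : G' ((a :: m) ++ [x]) = some (F₂ c x) := by
          have := hassoc' [] (a :: m) [x]
          simp only [List.nil_append, hc', Option.toList_some] at this
          rw [this]; exact h2' c x
        rw [e1, e2]
  · rintro G ⟨⟨hstd, hnil⟩, hassoc, _, h1, h2⟩ l x _
    have := hassoc [] l [x]
    simpa using this
end

section
/- Let F : X* → Y be a function, H : X* → X ∪ {ε} an associative ε-standard operation, and f : ran(H^♭) → Y a one-to-one function such that F^♭ = f ∘ H^♭. Then the following are equivalent: (i) the unary part F₁ of F is one-to-one; (ii) the unary part H₁ of H is one-to-one; (iii) H₁ = id. -/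
/-! Variadic functions on tuples (modeled as lists). -/

variable {X Y Y' : Type*}

theorem stmt10 [Nonempty X] [Nonempty Y] (F : List X → Y)
    (H : List X → Option X) (f : X → Y)
    (hH : VEpsStandard H) (hA : VAssoc H) (hf : Set.InjOn f (VRanFlatOp H))
    (hFf : ∀ x : List X, x ≠ [] → ∃ a : X, H x = some a ∧ F x = f a) :
    (Function.Injective (fun a : X => F [a]) ↔
      Function.Injective (fun a : X => H [a]))
    ∧
    (Function.Injective (fun a : X => F [a]) ↔ ∀ a : X, H [a] = some a) := by

  -- extract unary part h
  have key : ∀ a : X, ∃ b : X, H [a] = some b := by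
    intro a
    rcases hFf [a] (by simp) with ⟨b, hb, _⟩
    exact ⟨b, hb⟩
  choose h hh using key
  have hFh : ∀ a : X, F [a] = f (h a) := by
    intro a
    rcases hFf [a] (by simp) with ⟨b, hb, hfb⟩
    rw [hh a] at hb
    rw [hfb, Option.some_inj.mp hb]
  have hran : ∀ a : X, h a ∈ VRanFlatOp H := fun a => ⟨[a], by simp, hh a⟩
  have hidem : ∀ a : X, h (h a) = h a := by
    intro a
    have := hA [] [a] []
    simp [hh a, Option.toList] at this
    rw [hh (h a)] at this
    exact (Option.some_inj.mp this).symm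
  have hFinj_iff : Function.Injective (fun a : X => F [a]) ↔ Function.Injective h := by
    constructor
    · intro hF a b hab
      apply hF
      simp only [hFh, hab]
    · intro hinj a b hab
      simp only [hFh] at hab
      exact hinj (hf (hran a) (hran b) hab)
  have hHinj_iff : Function.Injective (fun a : X => H [a]) ↔ Function.Injective h := by
    constructor
    · intro hHi a b hab
      apply hHi
      simp only [hh, hab]
    · intro hinj a b hab
      simp only [hh] at hab
      exact hinj (Option.some_inj.mp hab)
  have hid_iff : Function.Injective h ↔ ∀ a : X, H [a] = some a := by
    constructor
    · intro hinj a
      rw [hh a, hinj (hidem a)]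
    · intro hid a b hab
      have ha : h a = a := Option.some_inj.mp ((hh a).symm.trans (hid a))
      have hb : h b = b := Option.some_inj.mp ((hh b).symm.trans (hid b))
      rw [← ha, ← hb, hab]
  exact ⟨hFinj_iff.trans hHinj_iff.symm, hFinj_iff.trans hid_iff⟩
end

section
/- Let F : X* → Y be a function whose unary part F₁ is one-to-one, and consider: (i) F is preassociative and unarily quasi-range-idempotent; (ii) there is a unique ε-standard operation H : X* → X ∪ {ε} such that F^♭ = F₁ ∘ H^♭, namely H^♭ = F₁⁻¹ ∘ F^♭, and this operation H is associative and unarily idempotent. Then (i) implies (ii), and if F is standard then (ii) implies (i). -/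
/-! Variadic functions on tuples (modeled as lists). -/

variable {X Y Y' : Type*}

theorem stmt11 [Nonempty X] [Nonempty Y] (F : List X → Y)
    (hinj : Function.Injective fun a : X => F [a]) :
    -- (i) ⇒ (ii)
    ((VPreassoc F ∧ VUnQRI F) →
      ((∃! H : List X → Option X, VEpsStandard H ∧
          ∀ x : List X, x ≠ [] → ∃ a : X, H x = some a ∧ F x = F [a]) ∧
        (∀ H : List X → Option X,
          (VEpsStandard H ∧ ∀ x : List X, x ≠ [] → ∃ a : X, H x = some a ∧ F x = F [a]) →
          VAssoc H ∧ ∀ a : X, H [a] = some a)))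
    ∧
    -- if F is standard, (ii) ⇒ (i)
    (VStandard F →
      ((∃! H : List X → Option X, VEpsStandard H ∧
          ∀ x : List X, x ≠ [] → ∃ a : X, H x = some a ∧ F x = F [a]) ∧
        (∀ H : List X → Option X,
          (VEpsStandard H ∧ ∀ x : List X, x ≠ [] → ∃ a : X, H x = some a ∧ F x = F [a]) →
          VAssoc H ∧ ∀ a : X, H [a] = some a)) →
      (VPreassoc F ∧ VUnQRI F)) := by
  classical
  have huniq : ∀ a b : X, F [a] = F [b] → a = b := fun a b h => hinj h
  constructor
  · rintro ⟨hpre, hqri⟩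
    have key : ∀ x : List X, x ≠ [] → ∃ a : X, F x = F [a] := by
      intro x hx
      have hx2 : F x ∈ VRanFlat F := ⟨x, hx, rfl⟩
      rw [← hqri] at hx2
      obtain ⟨a, ha⟩ := hx2
      exact ⟨a, ha.symm⟩
    constructor
    · -- existence and uniqueness
      refine ⟨fun x => if h : x = [] then none else some (Classical.choose (key x h)),
        ⟨⟨?_, by simp⟩, ?_⟩, ?_⟩
      · intro x hx
        by_contra hne
        simp [dif_neg hne] at hx
      · intro x hx
        refine ⟨Classical.choose (key x hx), by simp [dif_neg hx], Classical.choose_spec (key x hx)⟩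
      · rintro H' ⟨⟨hstd', hnone'⟩, hprop'⟩
        funext x
        by_cases hx : x = []
        · subst hx; simp [hnone']
        · obtain ⟨a, ha1, ha2⟩ := hprop' x hx
          have : a = Classical.choose (key x hx) :=
            huniq _ _ (ha2.symm.trans (Classical.choose_spec (key x hx)))
          simp [ha1, dif_neg hx, this]
    · rintro H ⟨⟨hstd, hnone⟩, hprop⟩
      constructor
      · intro x y z
        by_cases hy : y = []
        · subst hy; simp [hnone]
        · obtain ⟨b, hb1, hb2⟩ := hprop y hy
          have hne1 : x ++ y ++ z ≠ [] := by simp [hy]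
          have hne2 : x ++ [b] ++ z ≠ [] := by simp
          obtain ⟨a, ha1, ha2⟩ := hprop _ hne1
          obtain ⟨a', ha1', ha2'⟩ := hprop _ hne2
          have hF : F (x ++ y ++ z) = F (x ++ [b] ++ z) := hpre x y [b] z hb2
          have : a = a' := huniq _ _ (ha2.symm.trans (hF.trans ha2'))
          rw [hb1]
          show H (x ++ y ++ z) = H (x ++ [b] ++ z)
          rw [ha1, ha1', this]
      · intro a
        obtain ⟨b, hb1, hb2⟩ := hprop [a] (by simp)
        rw [hb1, huniq a b hb2]
  · rintro hstdF ⟨⟨H, ⟨hHeps, hHprop⟩, -⟩, hall⟩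
    obtain ⟨hassoc, hidem⟩ := hall H ⟨hHeps, hHprop⟩
    constructor
    · intro x y y' z hyy'
      by_cases hy : y = []
      · subst hy
        by_cases hy' : y' = []
        · subst hy'; rfl
        · exact absurd (hstdF y' hyy'.symm) hy'
      · by_cases hy' : y' = []
        · subst hy'; exact absurd (hstdF y hyy') hy
        · obtain ⟨b, hb1, hb2⟩ := hHprop y hy
          obtain ⟨b', hb1', hb2'⟩ := hHprop y' hy'
          have hbb : b = b' := huniq _ _ (hb2.symm.trans (hyy'.trans hb2'))
          subst hbb
          have h1 : H (x ++ y ++ z) = H (x ++ [b] ++ z) := by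
            have := hassoc x y z; rw [hb1] at this; simpa using this
          have h2 : H (x ++ y' ++ z) = H (x ++ [b] ++ z) := by
            have := hassoc x y' z; rw [hb1'] at this; simpa using this
          have hne1 : x ++ y ++ z ≠ [] := by simp [hy]
          have hne2 : x ++ y' ++ z ≠ [] := by simp [hy']
          obtain ⟨a, ha1, ha2⟩ := hHprop _ hne1
          obtain ⟨a', ha1', ha2'⟩ := hHprop _ hne2
          have haa : a = a' := by
            have : some a = some a' := by rw [← ha1, ← ha1', h1, h2]
            exact Option.some.inj this
          rw [ha2, ha2', haa]
    · ext yv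
      constructor
      · rintro ⟨a, rfl⟩
        exact ⟨[a], by simp, rfl⟩
      · rintro ⟨x, hx, rfl⟩
        obtain ⟨a, -, ha2⟩ := hHprop x hx
        exact ⟨a, ha2.symm⟩
end

section
/- Let I be a nontrivial real interval (nonempty and not a singleton). A standard function F : I* → ℝ is preassociative and unarily quasi-range-idempotent with F₁ and F₂ continuous and one-to-one in each argument if and only if there exist a real interval J of one of the forms ]−∞, b[, ]−∞, b], ]a, ∞[, [a, ∞[ or ℝ (with b ≤ 0 ≤ a) and continuous strictly monotonic functions φ : I → J and ψ : J → ℝ such that Fₙ(x₁, …, xₙ) = ψ(φ(x₁) + ⋯ + φ(xₙ)) for every n ≥ 1. For such an F one has ψ = F₁ ∘ φ⁻¹, and φ can be chosen strictly increasing. -/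
/-! Variadic functions on tuples (modeled as lists). -/

variable {X Y Y' : Type*}

/-!
Since `ran F₁ = ran F^♭`, every pair has a product `a ∘ b` with `F₁ (a ∘ b) = F₂ (a, b)`, and
preassociativity turns `F (a, b, l)` into `F (a ∘ b, l)`, so every tuple collapses to `F₁` of an
iterated product. Injectivity of `F₁` makes `∘` associative; `F₁` is a topological embedding, so
`∘` is continuous; it is cancellative, and on a connected domain associativity forces it to be
increasing in each argument. Aczél's theorem then yields a continuous increasing `φ` with
`φ (a ∘ b) = φ a + φ b`, whence `Fₙ = F₁ ∘ φ⁻¹ (φ x₁ + ⋯ + φ xₙ)`, and `J = ran φ` is an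
interval closed under addition, which pins down its shape.

For Aczél's theorem, when all elements are positive (`z < x ∘ z`, `z < z ∘ x`), `φ` is the
logarithm to a base `c`: the limit of `#{m ≥ 1 | c ^ m ≤ x ^ 2 ^ j} / 2 ^ j`. A monotone additive
map is automatically continuous, and strictly monotone unless it vanishes. In general the
elements with `x < x ∘ x` form an upper set of positive elements, and `φ` extends from there by
`φ x = φ (x ∘ r) - φ r`; the case `x ∘ x < x` is the order dual.
-/

open Set Filter Topology Function

theorem forall_lt_of_forall_ne {X β : Type*} [TopologicalSpace X] [PreconnectedSpace X]
    [LinearOrder β] [TopologicalSpace β] [OrderClosedTopology β] {f g : X → β}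
    (hf : Continuous f) (hg : Continuous g) {a : X} (ha : f a < g a) (hne : ∀ x, f x ≠ g x)
    (x : X) : f x < g x := by
  by_contra! hx
  obtain ⟨y, hy⟩ := intermediate_value_univ₂ hf hg ha.le hx
  exact hne y hy

theorem not_bddAbove_of_mapsTo {α : Type*} [ConditionallyCompleteLinearOrder α]
    [TopologicalSpace α] [OrderTopology α] {S : Set α} (hS : S.Nonempty) {f : α → α}
    (hf : Continuous f) (hmaps : MapsTo f S S) (hlt : ∀ z, z < f z) : ¬BddAbove S := by
  intro hbdd
  have hmem : f (sSup S) ∈ closure S := hmaps.closure hf (csSup_mem_closure hS hbdd)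
  exact (hlt _).not_ge (closure_minimal (fun z hz => le_csSup hbdd hz) isClosed_Iic hmem)

/-- `opPow op x n` is the power `x ^ (n + 1)`; the shifted exponent avoids a neutral element. -/
def opPow {α : Type*} (op : α → α → α) (x : α) : ℕ → α
  | 0 => x
  | n + 1 => op x (opPow op x n)

structure IsAczelOp {α : Type*} [LinearOrder α] [TopologicalSpace α] (op : α → α → α) :
    Prop where
  assoc : ∀ a b c, op (op a b) c = op a (op b c)
  continuous : Continuous fun p : α × α => op p.1 p.2
  strictMono_left : ∀ b, StrictMono fun a => op a b
  strictMono_right : ∀ a, StrictMono (op a)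

def IsPositiveOp {α : Type*} [LT α] (op : α → α → α) : Prop :=
  ∀ x z, z < op x z ∧ z < op z x

namespace IsAczelOp

section Algebra

variable {α : Type*} [LinearOrder α] [TopologicalSpace α] {op : α → α → α} (G : IsAczelOp op)
include G

theorem op_le_op {a b a' b' : α} (ha : a ≤ a') (hb : b ≤ b') : op a b ≤ op a' b' :=
  ((G.strictMono_left b).monotone ha).trans ((G.strictMono_right a').monotone hb)

theorem op_lt_op {a b a' b' : α} (ha : a < a') (hb : b < b') : op a b < op a' b' :=
  (G.strictMono_left b ha).trans (G.strictMono_right a' hb)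

theorem continuous_left (b : α) : Continuous fun a => op a b :=
  G.continuous.comp (continuous_id.prodMk continuous_const)

theorem continuous_right (a : α) : Continuous (op a) :=
  G.continuous.comp (continuous_const.prodMk continuous_id)

theorem opPow_add (x : α) (m n : ℕ) :
    opPow op x (m + n + 1) = op (opPow op x m) (opPow op x n) := by
  induction m with
  | zero => rw [zero_add]; rfl
  | succ m ih =>
    rw [show m + 1 + n + 1 = m + n + 1 + 1 by omega]
    change op x (opPow op x (m + n + 1)) = _
    rw [ih, ← G.assoc]
    rfl

theorem opPow_two_pow_succ (x : α) (j : ℕ) :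
    opPow op x (2 ^ (j + 1) - 1) = op (opPow op x (2 ^ j - 1)) (opPow op x (2 ^ j - 1)) := by
  rw [← G.opPow_add]
  congr 1
  have := Nat.one_le_two_pow (n := j)
  rw [pow_succ]
  omega

theorem opPow_le_opPow_left {x y : α} (hxy : x ≤ y) (n : ℕ) : opPow op x n ≤ opPow op y n := by
  induction n with
  | zero => exact hxy
  | succ n ih => exact G.op_le_op hxy ih

section Words

variable {x y : α} (hxy : op x y ≤ op y x)
include hxy

theorem op_opPow_le (k : ℕ) : op x (opPow op y k) ≤ op (opPow op y k) x := by
  induction k with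
  | zero => exact hxy
  | succ k ih =>
    calc op x (op y (opPow op y k)) = op (op x y) (opPow op y k) := (G.assoc _ _ _).symm
      _ ≤ op (op y x) (opPow op y k) := (G.strictMono_left _).monotone hxy
      _ = op y (op x (opPow op y k)) := G.assoc _ _ _
      _ ≤ op y (op (opPow op y k) x) := (G.strictMono_right _).monotone ih
      _ = op (op y (opPow op y k)) x := (G.assoc _ _ _).symm

theorem opPow_op_le (k : ℕ) : op (opPow op x k) y ≤ op y (opPow op x k) := by
  induction k with
  | zero => exact hxy
  | succ k ih =>
    calc op (op x (opPow op x k)) y = op x (op (opPow op x k) y) := G.assoc _ _ _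
      _ ≤ op x (op y (opPow op x k)) := (G.strictMono_right _).monotone ih
      _ = op (op x y) (opPow op x k) := (G.assoc _ _ _).symm
      _ ≤ op (op y x) (opPow op x k) := (G.strictMono_left _).monotone hxy
      _ = op y (op x (opPow op x k)) := G.assoc _ _ _

theorem op_opPow_opPow_le (n : ℕ) :
    op (opPow op x n) (opPow op y n) ≤ opPow op (op x y) n := by
  induction n with
  | zero => exact le_rfl
  | succ n ih =>
    calc op (op x (opPow op x n)) (op y (opPow op y n))
        = op x (op (op (opPow op x n) y) (opPow op y n)) := by
          rw [G.assoc x, ← G.assoc (opPow op x n)]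
      _ ≤ op x (op (op y (opPow op x n)) (opPow op y n)) :=
          (G.strictMono_right _).monotone ((G.strictMono_left _).monotone (G.opPow_op_le hxy n))
      _ = op (op x y) (op (opPow op x n) (opPow op y n)) := by
          rw [G.assoc y, ← G.assoc x, ← G.assoc (op x y)]
      _ ≤ op (op x y) (opPow op (op x y) n) := (G.strictMono_right _).monotone ih

theorem opPow_op_le_op_opPow (n : ℕ) :
    opPow op (op y x) n ≤ op (opPow op y n) (opPow op x n) := by
  induction n with
  | zero => exact le_rfl
  | succ n ih =>
    calc op (op y x) (opPow op (op y x) n)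
        ≤ op (op y x) (op (opPow op y n) (opPow op x n)) := (G.strictMono_right _).monotone ih
      _ = op y (op (op x (opPow op y n)) (opPow op x n)) := by rw [G.assoc y x, ← G.assoc x]
      _ ≤ op y (op (op (opPow op y n) x) (opPow op x n)) :=
          (G.strictMono_right _).monotone ((G.strictMono_left _).monotone (G.op_opPow_le hxy n))
      _ = op (op y (opPow op y n)) (op x (opPow op x n)) := by
          rw [G.assoc (opPow op y n) x, ← G.assoc y]

end Words

/-- Without commutativity, `(x y) ^ n` is only squeezed between `u ^ n v ^ n` and `v ^ n u ^ n`,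
where `u, v` is `x, y` in the order with `u v ≤ v u`. -/
theorem exists_opPow_op_mem_Icc (x y : α) (n : ℕ) :
    ∃ u v, (u = x ∧ v = y ∨ u = y ∧ v = x) ∧
      opPow op (op x y) n ∈ Icc (op (opPow op u n) (opPow op v n))
        (op (opPow op v n) (opPow op u n)) := by
  rcases le_total (op x y) (op y x) with h | h
  · exact ⟨x, y, .inl ⟨rfl, rfl⟩, G.op_opPow_opPow_le h n,
      (G.opPow_le_opPow_left h n).trans (G.opPow_op_le_op_opPow h n)⟩
  · exact ⟨y, x, .inr ⟨rfl, rfl⟩,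
      (G.op_opPow_opPow_le h n).trans (G.opPow_le_opPow_left h n), G.opPow_op_le_op_opPow h n⟩

end Algebra

section MonotoneAdditive

variable {α : Type*} [LinearOrder α] [TopologicalSpace α] {op : α → α → α}

theorem dual (G : IsAczelOp op) :
    IsAczelOp fun a b : αᵒᵈ => OrderDual.toDual (op (OrderDual.ofDual a) (OrderDual.ofDual b)) where
  assoc _ _ _ := congrArg OrderDual.toDual (G.assoc _ _ _)
  continuous := G.continuous
  strictMono_left b := (G.strictMono_left (OrderDual.ofDual b)).dual
  strictMono_right a := (G.strictMono_right (OrderDual.ofDual a)).dual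

variable [OrderTopology α] (G : IsAczelOp op) {φ : α → ℝ}
  (hmono : Monotone φ) (hadd : ∀ x y, φ (op x y) = φ x + φ y)
include G hmono hadd

/-- If `φ x = φ y` with `x < y`, then `φ w = φ z` as soon as `w x < z y` and `z x < w y`; so `φ`
is locally constant, hence constant, hence zero. -/
theorem strictMono_of_monotone [PreconnectedSpace α] (hne : ∃ x, φ x ≠ 0) : StrictMono φ := by
  have key : ∀ x y, x < y → φ x ≠ φ y := by
    intro x y hxy hφ
    have hlc : IsLocallyConstant φ := by
      refine (IsLocallyConstant.iff_eventually_eq φ).2 fun z => ?_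
      filter_upwards [(isOpen_lt (G.continuous_left x) continuous_const).mem_nhds
          (G.strictMono_right z hxy),
        (isOpen_lt continuous_const (G.continuous_left y)).mem_nhds
          (G.strictMono_right z hxy)] with w hw₁ hw₂
      have h₁ := hmono hw₁.le
      have h₂ := hmono hw₂.le
      rw [hadd, hadd] at h₁ h₂
      rcases le_total z w with h | h <;> linarith [hmono h]
    obtain ⟨u, hu⟩ := hne
    have := hlc.apply_eq_of_preconnectedSpace (op u u) u
    rw [hadd] at this
    exact hu (by linarith)
  refine hmono.strictMono_of_injective fun x y hxy => ?_
  by_contra hne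
  rcases lt_or_gt_of_ne hne with h | h
  exacts [key x y h hxy, key y x h hxy.symm]

variable [DenselyOrdered α]

/-- A left jump of size `δ` at `z` forces `φ q + δ ≤ φ q'` whenever `q < q' < z` (compare `z q`
with `z q'`), which is incompatible with the supremum of `φ` on `Iio z`. -/
theorem eventually_lt_of_lt {z : α} {b : ℝ} (hb : b < φ z) : ∀ᶠ w in 𝓝 z, b < φ w := by
  by_cases hex : ∃ w < z, b < φ w
  · obtain ⟨w, hwz, hbw⟩ := hex
    filter_upwards [Ioi_mem_nhds hwz] with w' hw' using hbw.trans_le (hmono hw'.le)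
  push Not at hex
  by_cases hmin : ∃ w, w < z
  swap
  · push Not at hmin
    exact Eventually.of_forall fun w => hb.trans_le (hmono (hmin w))
  exfalso
  obtain ⟨w₁, hw₁⟩ := hmin
  have jump : ∀ q s, s < op z q → φ s + (φ z - b) ≤ φ z + φ q := by
    intro q s hs
    obtain ⟨l, hl, hsub⟩ := exists_Ioc_subset_of_mem_nhds
      ((isOpen_lt continuous_const (G.continuous_left q)).mem_nhds hs) ⟨w₁, hw₁⟩
    obtain ⟨w, hlw, hwz⟩ := exists_between hl
    have := hmono (hsub ⟨hlw, hwz.le⟩).le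
    rw [hadd] at this
    linarith [hex w hwz]
  have hbdd : BddAbove (φ '' Iio z) :=
    ⟨φ z, forall_mem_image.2 fun w hw => hmono (le_of_lt hw)⟩
  have hne : (φ '' Iio z).Nonempty := ⟨_, mem_image_of_mem φ hw₁⟩
  obtain ⟨_, ⟨q, hqz, rfl⟩, hq⟩ :=
    exists_lt_of_lt_csSup hne (sub_lt_self (sSup (φ '' Iio z)) (sub_pos.2 hb))
  obtain ⟨q', hqq', hq'z⟩ := exists_between hqz
  have h₁ := jump q' (op z q) (G.strictMono_right z hqq')
  have h₂ : φ q' ≤ sSup (φ '' Iio z) := le_csSup hbdd (mem_image_of_mem φ hq'z)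
  rw [hadd] at h₁
  linarith

theorem continuous_of_monotone : Continuous φ := by
  refine continuous_iff_continuousAt.2 fun z => tendsto_order.2
    ⟨fun b hb => G.eventually_lt_of_lt hmono hadd hb, fun b hb => ?_⟩
  have := G.dual.eventually_lt_of_lt (φ := fun w => -φ (OrderDual.ofDual w))
    (fun u v huv => neg_le_neg (hmono huv))
    (fun u v => by rw [OrderDual.ofDual_toDual, hadd, neg_add])
    (z := OrderDual.toDual z) (neg_lt_neg hb)
  exact this.mono fun w hw => neg_lt_neg_iff.1 hw

end MonotoneAdditive

end IsAczelOp

theorem IsPositiveOp.strictMono_opPow {α : Type*} [Preorder α] {op : α → α → α}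
    (pos : IsPositiveOp op) (x : α) : StrictMono (opPow op x) :=
  strictMono_nat_of_lt_succ fun _ => (pos x _).1

/-- `powCount op c y` is the number of `m ≥ 1` with `c ^ m ≤ y`. -/
noncomputable def powCount {α : Type*} [Preorder α] (op : α → α → α) (c y : α) : ℕ :=
  sInf {n | y < opPow op c n}

noncomputable def logApprox {α : Type*} [Preorder α] (op : α → α → α) (c x : α) (j : ℕ) : ℝ :=
  powCount op c (opPow op x (2 ^ j - 1)) / 2 ^ j

noncomputable def opLog {α : Type*} [Preorder α] (op : α → α → α) (c x : α) : ℝ :=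
  ⨆ j, logApprox op c x j

namespace IsAczelOp

section Positive

variable {α : Type*} [ConditionallyCompleteLinearOrder α] [TopologicalSpace α] [OrderTopology α]
  {op : α → α → α} (G : IsAczelOp op) (pos : IsPositiveOp op)
include G pos

theorem exists_lt_opPow (x u : α) : ∃ n, u < opPow op x n := by
  have hunbdd := not_bddAbove_of_mapsTo (range_nonempty (opPow op x)) (G.continuous_right x)
    (by rintro _ ⟨n, rfl⟩; exact ⟨n + 1, rfl⟩) fun z => (pos x z).1
  obtain ⟨_, ⟨n, rfl⟩, hn⟩ := not_bddAbove_iff.1 hunbdd u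
  exact ⟨n, hn⟩

theorem lt_opPow_powCount (c y : α) : y < opPow op c (powCount op c y) :=
  Nat.sInf_mem (G.exists_lt_opPow pos c y)

theorem succ_le_powCount_iff {c y : α} {m : ℕ} :
    m + 1 ≤ powCount op c y ↔ opPow op c m ≤ y := by
  constructor
  · intro h
    by_contra! hlt
    have : powCount op c y ≤ m := Nat.sInf_le hlt
    omega
  · intro h
    by_contra! hlt
    have := (pos.strictMono_opPow c).monotone (Nat.le_of_lt_succ hlt)
    exact (h.trans_lt (G.lt_opPow_powCount pos c y)).not_ge this

theorem powCount_mono (c : α) : Monotone (powCount op c) := by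
  intro y y' h
  cases hk : powCount op c y with
  | zero => exact Nat.zero_le _
  | succ m =>
    exact (G.succ_le_powCount_iff pos).2 (((G.succ_le_powCount_iff pos).1 hk.ge).trans h)

theorem powCount_add_le (c y z : α) :
    powCount op c y + powCount op c z ≤ powCount op c (op y z) := by
  cases hy : powCount op c y with
  | zero => simpa [hy] using G.powCount_mono pos c (pos y z).1.le
  | succ a =>
  cases hz : powCount op c z with
  | zero => simpa [hy] using G.powCount_mono pos c (pos z y).2.le
  | succ b =>
  have hle : opPow op c (a + b + 1) ≤ op y z := by
    rw [G.opPow_add]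
    exact G.op_le_op ((G.succ_le_powCount_iff pos).1 hy.ge) ((G.succ_le_powCount_iff pos).1 hz.ge)
  have := (G.succ_le_powCount_iff pos).2 hle
  omega

theorem powCount_op_le (c y z : α) :
    powCount op c (op y z) ≤ powCount op c y + powCount op c z + 1 := by
  by_contra! h
  have hle := (G.succ_le_powCount_iff pos).1 (Nat.succ_le_of_lt h)
  rw [G.opPow_add] at hle
  exact hle.not_gt (G.op_lt_op (G.lt_opPow_powCount pos c y) (G.lt_opPow_powCount pos c z))

theorem powCount_opPow_op_mem_Icc (c x y : α) (n : ℕ) :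
    powCount op c (opPow op (op x y) n) ∈
      Icc (powCount op c (opPow op x n) + powCount op c (opPow op y n))
        (powCount op c (opPow op x n) + powCount op c (opPow op y n) + 1) := by
  obtain ⟨u, v, huv, hlo, hhi⟩ := G.exists_opPow_op_mem_Icc x y n
  have h₁ := (G.powCount_add_le pos c _ _).trans (G.powCount_mono pos c hlo)
  have h₂ := (G.powCount_mono pos c hhi).trans (G.powCount_op_le pos c _ _)
  rcases huv with ⟨rfl, rfl⟩ | ⟨rfl, rfl⟩ <;> constructor <;> omega

theorem monotone_logApprox (c x : α) : Monotone (logApprox op c x) := by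
  refine monotone_nat_of_le_succ fun j => ?_
  have h := G.powCount_add_le pos c (opPow op x (2 ^ j - 1)) (opPow op x (2 ^ j - 1))
  rw [← G.opPow_two_pow_succ] at h
  rw [logApprox, logApprox, div_le_div_iff₀ (by positivity) (by positivity), pow_succ (2 : ℝ) j]
  have : (2 * powCount op c (opPow op x (2 ^ j - 1)) : ℝ) ≤
      powCount op c (opPow op x (2 ^ (j + 1) - 1)) := by exact_mod_cast (two_mul _).trans_le h
  nlinarith [pow_pos (two_pos (α := ℝ)) j]

theorem logApprox_le (c x : α) (j : ℕ) : logApprox op c x j ≤ powCount op c x + 1 := by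
  set upper : ℕ → ℝ := fun j => (powCount op c (opPow op x (2 ^ j - 1)) + 1) / 2 ^ j
  have hanti : Antitone upper := by
    refine antitone_nat_of_succ_le fun j => ?_
    have h := G.powCount_op_le pos c (opPow op x (2 ^ j - 1)) (opPow op x (2 ^ j - 1))
    rw [← G.opPow_two_pow_succ] at h
    simp only [upper]
    rw [div_le_div_iff₀ (by positivity) (by positivity), pow_succ (2 : ℝ) j]
    have : (powCount op c (opPow op x (2 ^ (j + 1) - 1)) : ℝ) + 1 ≤
        2 * (powCount op c (opPow op x (2 ^ j - 1)) + 1) := by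
      exact_mod_cast (by omega : powCount op c (opPow op x (2 ^ (j + 1) - 1)) + 1 ≤
        2 * (powCount op c (opPow op x (2 ^ j - 1)) + 1))
    nlinarith [pow_pos (two_pos (α := ℝ)) j]
  calc logApprox op c x j ≤ upper j := by
        simp only [logApprox, upper]; gcongr; linarith
    _ ≤ upper 0 := hanti (Nat.zero_le j)
    _ = powCount op c x + 1 := by simp [upper, opPow]

theorem tendsto_logApprox (c x : α) :
    Tendsto (logApprox op c x) atTop (𝓝 (opLog op c x)) :=
  tendsto_atTop_ciSup (G.monotone_logApprox pos c x)
    ⟨_, forall_mem_range.2 (G.logApprox_le pos c x)⟩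

theorem opLog_op (c x y : α) : opLog op c (op x y) = opLog op c x + opLog op c y := by
  have hsum := (G.tendsto_logApprox pos c x).add (G.tendsto_logApprox pos c y)
  have herr : Tendsto (fun j : ℕ => logApprox op c x j + logApprox op c y j + 1 / 2 ^ j) atTop
      (𝓝 (opLog op c x + opLog op c y)) := by
    have hgeom : Tendsto (fun j : ℕ => (1 : ℝ) / 2 ^ j) atTop (𝓝 0) := by
      simpa only [one_div_pow] using
        tendsto_pow_atTop_nhds_zero_of_lt_one (by norm_num : (0 : ℝ) ≤ 1 / 2) (by norm_num)
    simpa using hsum.add hgeom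
  refine tendsto_nhds_unique (G.tendsto_logApprox pos c (op x y))
    (tendsto_of_tendsto_of_tendsto_of_le_of_le hsum herr (fun j => ?_) fun j => ?_)
  all_goals
    obtain ⟨h₁, h₂⟩ := G.powCount_opPow_op_mem_Icc pos c x y (2 ^ j - 1)
    simp only [logApprox, ← add_div]
    gcongr
    exact_mod_cast ‹_›

theorem monotone_opLog (c : α) : Monotone (opLog op c) := fun x y hxy =>
  ciSup_mono ⟨_, forall_mem_range.2 (G.logApprox_le pos c y)⟩ fun j => by
    simp only [logApprox]
    gcongr
    exact_mod_cast G.powCount_mono pos c (G.opPow_le_opPow_left hxy _)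

theorem opLog_pos (c x : α) : 0 < opLog op c x := by
  obtain ⟨n, hn⟩ := G.exists_lt_opPow pos x c
  have hle : c ≤ opPow op x (2 ^ n - 1) :=
    hn.le.trans ((pos.strictMono_opPow x).monotone (Nat.le_sub_one_of_lt n.lt_two_pow_self))
  have h₁ : 1 ≤ powCount op c (opPow op x (2 ^ n - 1)) :=
    (G.succ_le_powCount_iff pos (m := 0)).2 hle
  calc (0 : ℝ) < 1 / 2 ^ n := by positivity
    _ ≤ logApprox op c x n := by
      unfold logApprox
      gcongr
      exact_mod_cast h₁
    _ ≤ opLog op c x := le_ciSup ⟨_, forall_mem_range.2 (G.logApprox_le pos c x)⟩ n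

theorem exists_additive_of_isPositiveOp [DenselyOrdered α] [PreconnectedSpace α] [Nonempty α] :
    ∃ φ : α → ℝ, StrictMono φ ∧ Continuous φ ∧ (∀ x y, φ (op x y) = φ x + φ y) ∧
      ∀ x, 0 < φ x := by
  obtain ⟨c⟩ := ‹Nonempty α›
  have hmono := G.monotone_opLog pos c
  have hadd := G.opLog_op pos c
  exact ⟨opLog op c, G.strictMono_of_monotone hmono hadd ⟨c, (G.opLog_pos pos c c).ne'⟩,
    G.continuous_of_monotone hmono hadd, hadd, G.opLog_pos pos c⟩

end Positive

section Extension

variable {α : Type*} [LinearOrder α] [TopologicalSpace α] {op : α → α → α} (G : IsAczelOp op)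
include G

theorem restrict {Y : Set α} (hmul : ∀ a ∈ Y, ∀ b ∈ Y, op a b ∈ Y) :
    IsAczelOp fun a b : Y => (⟨op a b, hmul a a.2 b b.2⟩ : Y) where
  assoc _ _ _ := Subtype.ext (G.assoc _ _ _)
  continuous :=
    (G.continuous.comp (continuous_subtype_val.prodMap continuous_subtype_val)).subtype_mk _
  strictMono_left b _ _ h := G.strictMono_left b h
  strictMono_right a _ _ h := G.strictMono_right a h

theorem op_ne_self_left {x : α} (hx : x < op x x) (z : α) : op x z ≠ z := by
  intro hz
  have h : op x z < op (op x x) z := G.strictMono_left z hx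
  rw [G.assoc, hz, hz] at h
  exact lt_irrefl z h

theorem op_ne_self_right {x : α} (hx : x < op x x) (z : α) : op z x ≠ z := by
  intro hz
  have h : op z x < op z (op x x) := G.strictMono_right z hx
  rw [← G.assoc, hz, hz] at h
  exact lt_irrefl z h

theorem isPositive_of_lt_op_self [OrderClosedTopology α] [PreconnectedSpace α] {x : α}
    (hx : x < op x x) (z : α) : z < op x z ∧ z < op z x :=
  ⟨forall_lt_of_forall_ne continuous_id (G.continuous_right x) hx
      (fun z h => G.op_ne_self_left hx z h.symm) z,
    forall_lt_of_forall_ne continuous_id (G.continuous_left x) hx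
      (fun z h => G.op_ne_self_right hx z h.symm) z⟩

/-- `Φ x = ψ (x r) - ψ r` for any `r ∈ Y` with `x r ∈ Y`; this does not depend on `r` because
`op` is commutative on `Y`, where `ψ` is injective and additive. -/
theorem exists_additive_extension {Y : Set α} (hY : IsUpperSet Y)
    (hmul : ∀ a ∈ Y, ∀ b ∈ Y, op a b ∈ Y) (hbig : ∀ x, ∃ r ∈ Y, op x r ∈ Y) {ψ : α → ℝ}
    (hψ : StrictMonoOn ψ Y) (hψadd : ∀ a ∈ Y, ∀ b ∈ Y, ψ (op a b) = ψ a + ψ b) :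
    ∃ Φ : α → ℝ, Monotone Φ ∧ (∀ x y, Φ (op x y) = Φ x + Φ y) ∧ EqOn Φ ψ Y := by
  have hcomm : ∀ a ∈ Y, ∀ b ∈ Y, op a b = op b a := fun a ha b hb =>
    hψ.injOn (hmul a ha b hb) (hmul b hb a ha) (by rw [hψadd a ha b hb, hψadd b hb a ha, add_comm])
  choose r hr hxr using hbig
  set Φ : α → ℝ := fun x => ψ (op x (r x)) - ψ (r x)
  have hΦ : ∀ x s, s ∈ Y → op x s ∈ Y → Φ x = ψ (op x s) - ψ s := by
    intro x s hs hxs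
    have h := hψadd _ (hxr x) s hs
    rw [G.assoc, hcomm _ (hr x) s hs, ← G.assoc, hψadd _ hxs _ (hr x)] at h
    simp only [Φ]
    linarith
  refine ⟨Φ, fun x y hxy => ?_, fun x y => ?_, fun a ha => ?_⟩
  · have hle := (G.strictMono_left (r x)).monotone hxy
    have hy : op y (r x) ∈ Y := hY hle (hxr x)
    rw [hΦ y (r x) (hr x) hy]
    exact sub_le_sub_right (hψ.monotoneOn (hxr x) hy hle) _
  · obtain ⟨s, hs, hxs⟩ := (⟨r _, hr _, hxr _⟩ : ∃ s ∈ Y, op (op x (op y (r y))) s ∈ Y)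
    have h₁ : op (op x y) (op (r y) s) = op x (op (op y (r y)) s) := by simp only [G.assoc]
    have h₂ : op (op x (op y (r y))) s = op x (op (op y (r y)) s) := G.assoc _ _ _
    rw [h₂] at hxs
    rw [hΦ (op x y) _ (hmul _ (hr y) _ hs) (h₁ ▸ hxs), hΦ x _ (hmul _ (hxr y) _ hs) hxs,
      hΦ y _ (hr y) (hxr y), hψadd _ (hr y) _ hs, hψadd _ (hxr y) _ hs, h₁]
    ring
  · rw [hΦ a a ha (hmul a ha a ha), hψadd a ha a ha]
    ring

end Extension

section Representation

variable {α : Type*} [ConditionallyCompleteLinearOrder α] [TopologicalSpace α] [OrderTopology α]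
  {op : α → α → α} (G : IsAczelOp op)
include G

theorem exists_le_op {q : α} (hq : ∀ z, z < op z q) (x u : α) : ∃ p, q ≤ p ∧ u ≤ op x p := by
  have hunbdd := not_bddAbove_of_mapsTo (range_nonempty (op x)) (G.continuous_left q)
    (by rintro _ ⟨v, rfl⟩; exact ⟨op v q, (G.assoc x v q).symm⟩) hq
  obtain ⟨_, ⟨v, rfl⟩, hv⟩ := not_bddAbove_iff.1 hunbdd u
  exact ⟨max v q, le_max_right v q, hv.le.trans ((G.strictMono_right x).monotone (le_max_left v q))⟩

variable [DenselyOrdered α] [PreconnectedSpace α]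

theorem exists_additive_of_lt_op_self {p : α} (hp : p < op p p) :
    ∃ φ : α → ℝ, StrictMono φ ∧ Continuous φ ∧ ∀ x y, φ (op x y) = φ x + φ y := by
  set Y := {x | x < op x x}
  have hpos : ∀ x ∈ Y, ∀ z, z < op x z ∧ z < op z x := fun x hx => G.isPositive_of_lt_op_self hx
  have hY : IsUpperSet Y := fun x y hxy hx =>
    (hpos x hx y).2.trans_le ((G.strictMono_right y).monotone hxy)
  have hmul : ∀ a ∈ Y, ∀ b ∈ Y, op a b ∈ Y := fun a ha b hb => hY (hpos a ha b).1.le hb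
  have hbig : ∀ x, ∃ r ∈ Y, op x r ∈ Y := fun x => by
    obtain ⟨r, hpr, hr⟩ := G.exists_le_op (fun z => (hpos p hp z).2) x p
    exact ⟨r, hY hpr hp, hY hr hp⟩
  have : Inhabited Y := ⟨⟨p, hp⟩⟩
  have : Y.OrdConnected := hY.ordConnected
  have : PreconnectedSpace Y := Subtype.preconnectedSpace hY.ordConnected.isPreconnected
  obtain ⟨ψ, hψmono, -, hψadd, hψpos⟩ := (G.restrict hmul).exists_additive_of_isPositiveOp
    fun a b => hpos a a.2 b
  set ψ₀ : α → ℝ := fun v => if h : v ∈ Y then ψ ⟨v, h⟩ else 0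
  have hψ₀ : ∀ a (ha : a ∈ Y), ψ₀ a = ψ ⟨a, ha⟩ := fun a ha => dif_pos ha
  obtain ⟨Φ, hΦmono, hΦadd, hΦψ⟩ := G.exists_additive_extension (ψ := ψ₀) hY hmul hbig
    (fun a ha b hb hab => by rw [hψ₀ a ha, hψ₀ b hb]; exact hψmono hab)
    (fun a ha b hb => by
      rw [hψ₀ a ha, hψ₀ b hb, hψ₀ _ (hmul a ha b hb)]
      exact hψadd ⟨a, ha⟩ ⟨b, hb⟩)
  have hΦp : Φ p ≠ 0 := by rw [hΦψ hp, hψ₀ p hp]; exact (hψpos _).ne'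
  exact ⟨Φ, G.strictMono_of_monotone hΦmono hΦadd ⟨p, hΦp⟩, G.continuous_of_monotone hΦmono hΦadd,
    hΦadd⟩

variable [Nontrivial α]

theorem exists_additive :
    ∃ φ : α → ℝ, StrictMono φ ∧ Continuous φ ∧ ∀ x y, φ (op x y) = φ x + φ y := by
  by_cases hP : ∃ p, p < op p p
  · obtain ⟨p, hp⟩ := hP
    exact G.exists_additive_of_lt_op_self hp
  by_cases hN : ∃ n, op n n < n
  · obtain ⟨n, hn⟩ := hN
    have : PreconnectedSpace αᵒᵈ := inferInstanceAs (PreconnectedSpace α)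
    obtain ⟨φ, hφmono, hφcont, hφadd⟩ :=
      G.dual.exists_additive_of_lt_op_self (p := OrderDual.toDual n) hn
    refine ⟨fun x => -φ (OrderDual.toDual x), fun a b hab => neg_lt_neg (hφmono hab),
      (hφcont.comp continuous_toDual).neg, fun x y => ?_⟩
    have := hφadd (OrderDual.toDual x) (OrderDual.toDual y)
    simp only [OrderDual.ofDual_toDual] at this
    simp only [this, neg_add]
  push Not at hP hN
  have hidem : ∀ x, op x x = x := fun x => le_antisymm (hP x) (hN x)
  obtain ⟨a, b, hab⟩ := exists_pair_ne α
  have h₁ : op a b = b := (G.strictMono_right a).injective (by rw [← G.assoc, hidem])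
  have h₂ : op a b = a := (G.strictMono_left b).injective (show op (op a b) b = op a b by
    rw [G.assoc, hidem])
  exact (hab (h₂.symm.trans h₁)).elim

end Representation

end IsAczelOp

section OrderedOperations

variable {α : Type*} [ConditionallyCompleteLinearOrder α] [DenselyOrdered α] [TopologicalSpace α]
  [OrderTopology α] [PreconnectedSpace α] {op : α → α → α}
  (hassoc : ∀ a b c, op (op a b) c = op a (op b c)) (hcont : Continuous fun p : α × α => op p.1 p.2)
include hassoc hcont

/-- Each `op a` is strictly monotone or antitone, and by connectedness all of them reverse the
order as soon as one does; then `x (x x) < x (x y)` and `(x x) y < (x x) x` contradict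
associativity. -/
theorem strictMono_op_right_of_injective (hinj : ∀ a, Injective (op a)) (a : α) :
    StrictMono (op a) := by
  have hcont_left : ∀ c, Continuous fun b => op b c := fun c =>
    hcont.comp (continuous_id.prodMk continuous_const)
  intro x y hxy
  by_contra! hyx
  have hrev : ∀ b, op b y < op b x :=
    forall_lt_of_forall_ne (hcont_left y) (hcont_left x)
      (hyx.lt_of_ne fun h => hxy.ne' (hinj a h)) (fun b h => hxy.ne' (hinj b h))
  have hanti : StrictAnti (op x) :=
    ((hcont.comp (continuous_const.prodMk continuous_id)).strictMono_of_inj (hinj x)).resolve_left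
      fun hm => (hm hxy).not_gt (hrev x)
  have h := hanti (hrev x)
  rw [← hassoc, ← hassoc] at h
  exact h.not_gt (hrev (op x x))

theorem strictMono_op_left_of_injective (hinj : ∀ b, Injective fun a => op a b) (b : α) :
    StrictMono fun a => op a b :=
  strictMono_op_right_of_injective (op := fun a b => op b a) (fun a b c => (hassoc c b a).symm)
    (hcont.comp continuous_swap) hinj b

end OrderedOperations

theorem Continuous.isEmbedding_of_injective {X : Type*} [ConditionallyCompleteLinearOrder X]
    [DenselyOrdered X] [TopologicalSpace X] [OrderTopology X] [PreconnectedSpace X] {f : X → ℝ}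
    (hc : Continuous f) (hi : Injective f) : IsEmbedding f := by
  rcases hc.strictMono_of_inj hi with hm | ha
  · exact hm.isEmbedding_of_ordConnected (isPreconnected_range hc).ordConnected
  · have hneg : IsEmbedding fun x => -f x := ha.neg.isEmbedding_of_ordConnected
      (isPreconnected_range hc.neg).ordConnected
    simpa [comp_def] using (Homeomorph.neg ℝ).isEmbedding.comp hneg

theorem Topology.IsEmbedding.continuousOn_invFun {X Y : Type*} [TopologicalSpace X]
    [TopologicalSpace Y] [Nonempty X] {f : X → Y} (hf : IsEmbedding f) :
    ContinuousOn (invFun f) (range f) := by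
  rw [continuousOn_iff_continuous_domRestrict]
  convert hf.toHomeomorph.symm.continuous using 1
  funext ⟨_, a, rfl⟩
  simp [leftInverse_invFun hf.injective a, hf.toHomeomorph_symm_apply]

theorem StrictMono.strictMonoOn_invFun {X Y : Type*} [LinearOrder X] [Preorder Y] [Nonempty X]
    {f : X → Y} (hf : StrictMono f) : StrictMonoOn (invFun f) (range f) := by
  rintro _ ⟨a, rfl⟩ _ ⟨b, rfl⟩ hab
  rw [leftInverse_invFun hf.injective a, leftInverse_invFun hf.injective b]
  exact hf.lt_iff_lt.1 hab

theorem map_foldl_of_map_op {X : Type*} {op : X → X → X} {φ : X → ℝ}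
    (hadd : ∀ x y, φ (op x y) = φ x + φ y) (a : X) (l : List X) :
    φ (l.foldl op a) = φ a + (l.map φ).sum := by
  induction l generalizing a with
  | nil => simp
  | cons b l ih => rw [List.foldl_cons, ih, hadd, List.map_cons, List.sum_cons, add_assoc]

def IsAddClosedInterval (J : Set ℝ) : Prop :=
  (∃ b : ℝ, b ≤ 0 ∧ J = Set.Iio b) ∨ (∃ b : ℝ, b ≤ 0 ∧ J = Set.Iic b) ∨
    (∃ a : ℝ, 0 ≤ a ∧ J = Set.Ioi a) ∨ (∃ a : ℝ, 0 ≤ a ∧ J = Set.Ici a) ∨ J = Set.univ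

theorem IsAddClosedInterval.add_mem {J : Set ℝ} (hJ : IsAddClosedInterval J) {s t : ℝ}
    (hs : s ∈ J) (ht : t ∈ J) : s + t ∈ J := by
  rcases hJ with ⟨b, hb, rfl⟩ | ⟨b, hb, rfl⟩ | ⟨a, ha, rfl⟩ | ⟨a, ha, rfl⟩ | rfl
  · simp only [mem_Iio] at *; linarith
  · simp only [mem_Iic] at *; linarith
  · simp only [mem_Ioi] at *; linarith
  · simp only [mem_Ici] at *; linarith
  · trivial

theorem not_bddAbove_of_add_mem {J : Set ℝ} (hadd : ∀ s ∈ J, ∀ t ∈ J, s + t ∈ J) {t : ℝ}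
    (ht : t ∈ J) (htpos : 0 < t) : ¬BddAbove J := by
  have hmul : ∀ n : ℕ, (n + 1) • t ∈ J := by
    intro n
    induction n with
    | zero => simpa using ht
    | succ n ih => rw [succ_nsmul]; exact hadd _ ih t ht
  refine not_bddAbove_iff.2 fun x => ?_
  obtain ⟨n, hn⟩ := Archimedean.arch x htpos
  exact ⟨_, hmul n, hn.trans_lt (by rw [succ_nsmul]; exact lt_add_of_pos_right _ htpos)⟩

theorem not_bddBelow_of_add_mem {J : Set ℝ} (hadd : ∀ s ∈ J, ∀ t ∈ J, s + t ∈ J) {t : ℝ}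
    (ht : t ∈ J) (htneg : t < 0) : ¬BddBelow J := by
  rw [← bddAbove_neg]
  refine not_bddAbove_of_add_mem (fun s hs u hu => ?_) (t := -t) (by simpa using ht)
    (neg_pos.2 htneg)
  rw [Set.mem_neg] at hs hu ⊢
  rw [neg_add]
  exact hadd _ hs _ hu

theorem isAddClosedInterval_of_add_mem {J : Set ℝ} (hJ : J.OrdConnected)
    (hnt : ∃ s ∈ J, ∃ t ∈ J, s ≠ t) (hadd : ∀ s ∈ J, ∀ t ∈ J, s + t ∈ J) :
    IsAddClosedInterval J := by
  obtain ⟨s, hs, t, ht, hst⟩ := hnt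
  have hpc := hJ.isPreconnected
  by_cases hpos : ∃ u ∈ J, 0 < u <;> by_cases hneg : ∃ u ∈ J, u < 0
  · obtain ⟨u, hu, hu0⟩ := hpos
    obtain ⟨v, hv, hv0⟩ := hneg
    exact .inr <| .inr <| .inr <| .inr <|
      hpc.eq_univ_of_unbounded (not_bddBelow_of_add_mem hadd hv hv0)
        (not_bddAbove_of_add_mem hadd hu hu0)
  · obtain ⟨u, hu, hu0⟩ := hpos
    push Not at hneg
    have hbdd : BddBelow J := ⟨0, hneg⟩
    have ha : 0 ≤ sInf J := le_csInf ⟨s, hs⟩ hneg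
    rcases mem_Ici_Ioi_of_subset_of_subset
      (hpc.Ioi_csInf_subset hbdd (not_bddAbove_of_add_mem hadd hu hu0))
      fun x hx => csInf_le hbdd hx with h | h
    · exact .inr <| .inr <| .inr <| .inl ⟨_, ha, h⟩
    · exact .inr <| .inr <| .inl ⟨_, ha, h⟩
  · obtain ⟨u, hu, hu0⟩ := hneg
    push Not at hpos
    have hbdd : BddAbove J := ⟨0, hpos⟩
    have hb : sSup J ≤ 0 := csSup_le ⟨s, hs⟩ hpos
    rcases mem_Iic_Iio_of_subset_of_subset
      (hpc.Iio_csSup_subset (not_bddBelow_of_add_mem hadd hu hu0) hbdd)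
      fun x hx => le_csSup hbdd hx with h | h
    · exact .inr <| .inl ⟨_, hb, h⟩
    · exact .inl ⟨_, hb, h⟩
  · push Not at hpos hneg
    exact (hst ((le_antisymm (hpos s hs) (hneg s hs)).trans
      (le_antisymm (hpos t ht) (hneg t ht)).symm)).elim

structure QuasiSumRep {X : Type*} [TopologicalSpace X] [Preorder X] (F : List X → ℝ)
    (J : Set ℝ) (φ : X → ℝ) (ψ : ℝ → ℝ) : Prop where
  isAddClosedInterval : IsAddClosedInterval J
  continuous_inner : Continuous φ
  strictMono_inner : StrictMono φ
  range_inner : range φ = J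
  continuousOn_outer : ContinuousOn ψ J
  strictMonoOn_outer : StrictMonoOn ψ J ∨ StrictAntiOn ψ J
  apply_eq : ∀ l : List X, l ≠ [] → F l = ψ (l.map φ).sum
  outer_inner : ∀ a, ψ (φ a) = F [a]

namespace QuasiSumRep

variable {X : Type*} [TopologicalSpace X] [LinearOrder X] {F : List X → ℝ} {J : Set ℝ}
  {φ : X → ℝ} {ψ : ℝ → ℝ} (h : QuasiSumRep F J φ ψ)
include h

theorem inner_mem (a : X) : φ a ∈ J := h.range_inner ▸ mem_range_self a

theorem sum_map_mem {l : List X} (hl : l ≠ []) : (l.map φ).sum ∈ J := by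
  induction l with
  | nil => exact absurd rfl hl
  | cons a l ih =>
    rcases eq_or_ne l [] with rfl | hl'
    · simpa using h.inner_mem a
    · rw [List.map_cons, List.sum_cons]
      exact h.isAddClosedInterval.add_mem (h.inner_mem a) (ih hl')

theorem injOn_outer : InjOn ψ J := h.strictMonoOn_outer.elim StrictMonoOn.injOn StrictAntiOn.injOn

theorem apply_pair (a b : X) : F [a, b] = ψ (φ a + φ b) := by
  simp [h.apply_eq [a, b] (by simp)]

theorem add_mem (a b : X) : φ a + φ b ∈ J :=
  h.isAddClosedInterval.add_mem (h.inner_mem a) (h.inner_mem b)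

theorem vPreassoc (hSt : VStandard F) : VPreassoc F := by
  intro x y y' z hyy
  rcases eq_or_ne y [] with rfl | hy
  · rw [hSt y' hyy.symm]
  rcases eq_or_ne y' [] with rfl | hy'
  · rw [hSt y hyy]
  have hsum : (y.map φ).sum = (y'.map φ).sum := h.injOn_outer (h.sum_map_mem hy)
    (h.sum_map_mem hy') (by rw [← h.apply_eq y hy, ← h.apply_eq y' hy', hyy])
  rw [h.apply_eq _ (by simp [hy]), h.apply_eq _ (by simp [hy'])]
  simp only [List.map_append, List.sum_append, hsum]

theorem vUnQRI : VUnQRI F := by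
  refine Subset.antisymm (by rintro _ ⟨a, rfl⟩; exact ⟨[a], by simp, rfl⟩) ?_
  rintro _ ⟨l, hl, rfl⟩
  have : (l.map φ).sum ∈ range φ := h.range_inner ▸ h.sum_map_mem hl
  obtain ⟨c, hc⟩ := this
  exact ⟨c, show F [c] = F l by rw [← h.outer_inner, hc, h.apply_eq l hl]⟩

theorem continuous_unary : Continuous fun a => F [a] := by
  simpa only [comp_def, h.outer_inner] using
    h.continuousOn_outer.comp_continuous h.continuous_inner h.inner_mem

theorem injective_unary : Injective fun a => F [a] := fun a b hab =>
  h.strictMono_inner.injective <| h.injOn_outer (h.inner_mem a) (h.inner_mem b) <| by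
    rw [h.outer_inner, h.outer_inner]
    exact hab

theorem continuous_binary : Continuous fun p : X × X => F [p.1, p.2] := by
  simpa only [comp_def, Pi.add_apply, h.apply_pair] using h.continuousOn_outer.comp_continuous
    ((h.continuous_inner.comp continuous_fst).add (h.continuous_inner.comp continuous_snd))
    fun p => h.add_mem p.1 p.2

theorem injective_binary_right (a : X) : Injective fun b => F [a, b] := fun b b' hbb =>
  h.strictMono_inner.injective <| add_left_cancel <|
    h.injOn_outer (h.add_mem a b) (h.add_mem a b') (by simpa only [h.apply_pair] using hbb)

theorem injective_binary_left (b : X) : Injective fun a => F [a, b] := fun a a' haa =>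
  h.strictMono_inner.injective <| add_right_cancel <|
    h.injOn_outer (h.add_mem a b) (h.add_mem a' b) (by simpa only [h.apply_pair] using haa)

end QuasiSumRep

section Forward

variable {X : Type*} {F : List X → ℝ}

theorem VUnQRI.exists_op (hQRI : VUnQRI F) : ∃ op : X → X → X, ∀ a b, F [op a b] = F [a, b] := by
  have h : ∀ a b, ∃ c, F [c] = F [a, b] := fun a b => by
    have : F [a, b] ∈ VRanFlat F := ⟨[a, b], by simp, rfl⟩
    rwa [← hQRI] at this
  choose op hop using h
  exact ⟨op, hop⟩

variable (hPre : VPreassoc F) {op : X → X → X} (hop : ∀ a b, F [op a b] = F [a, b])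
include hPre hop

theorem VPreassoc.apply_cons_cons (a b : X) (l : List X) : F (a :: b :: l) = F (op a b :: l) := by
  simpa using hPre [] [a, b] [op a b] l (hop a b).symm

theorem VPreassoc.apply_cons_eq_foldl (a : X) (l : List X) : F (a :: l) = F [l.foldl op a] := by
  induction l generalizing a with
  | nil => rfl
  | cons b l ih => rw [hPre.apply_cons_cons hop, ih, List.foldl_cons]

theorem VPreassoc.op_assoc (hinj : Injective fun a => F [a]) (a b c : X) :
    op (op a b) c = op a (op b c) :=
  hinj <| by
    calc F [op (op a b) c] = F [a, b, c] := by rw [hop, ← hPre.apply_cons_cons hop]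
      _ = F [op a (op b c)] := by
        rw [hop]
        simpa using hPre [a] [b, c] [op b c] [] (hop b c).symm

end Forward

theorem exists_quasiSumRep {X : Type*} [ConditionallyCompleteLinearOrder X] [DenselyOrdered X]
    [TopologicalSpace X] [OrderTopology X] [PreconnectedSpace X] [Nontrivial X]
    {F : List X → ℝ} (hPre : VPreassoc F) (hQRI : VUnQRI F)
    (hc₁ : Continuous fun a => F [a]) (hi₁ : Injective fun a => F [a])
    (hc₂ : Continuous fun p : X × X => F [p.1, p.2])
    (hi₂r : ∀ a, Injective fun b => F [a, b]) (hi₂l : ∀ b, Injective fun a => F [a, b]) :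
    ∃ J φ ψ, QuasiSumRep F J φ ψ := by
  obtain ⟨op, hop⟩ := hQRI.exists_op
  have hassoc := hPre.op_assoc hop hi₁
  have hcont : Continuous fun p : X × X => op p.1 p.2 :=
    (hc₁.isEmbedding_of_injective hi₁).continuous_iff.2
      (by simpa only [comp_def, hop] using hc₂)
  have G : IsAczelOp op :=
    ⟨hassoc, hcont,
      strictMono_op_left_of_injective hassoc hcont fun b a a' h =>
        hi₂l b (by simpa only [hop] using congrArg (fun c => F [c]) h),
      strictMono_op_right_of_injective hassoc hcont fun a b b' h =>
        hi₂r a (by simpa only [hop] using congrArg (fun c => F [c]) h)⟩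
  obtain ⟨φ, hφm, hφc, hφadd⟩ := G.exists_additive
  have hJ : (range φ).OrdConnected := (isPreconnected_range hφc).ordConnected
  refine ⟨range φ, φ, fun t => F [invFun φ t], ⟨?_, hφc, hφm, rfl, ?_, ?_, ?_, ?_⟩⟩
  · obtain ⟨x, y, hxy⟩ := exists_pair_ne X
    refine isAddClosedInterval_of_add_mem hJ
      ⟨_, mem_range_self x, _, mem_range_self y, hφm.injective.ne hxy⟩ ?_
    rintro _ ⟨a, rfl⟩ _ ⟨b, rfl⟩
    exact ⟨op a b, hφadd a b⟩
  · exact hc₁.comp_continuousOn (hφm.isEmbedding_of_ordConnected hJ).continuousOn_invFun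
  · rcases hc₁.strictMono_of_inj hi₁ with hm | ha
    exacts [.inl (hm.comp_strictMonoOn hφm.strictMonoOn_invFun),
      .inr (ha.comp_strictMonoOn hφm.strictMonoOn_invFun)]
  · rintro (_ | ⟨a, l⟩) hl
    · exact absurd rfl hl
    · rw [hPre.apply_cons_eq_foldl hop, List.map_cons, List.sum_cons,
        ← map_foldl_of_map_op hφadd, leftInverse_invFun hφm.injective]
  · intro a
    simp only [leftInverse_invFun hφm.injective a]

theorem stmt13 (I : Set ℝ) (hconn : I.OrdConnected)
    (hne : ∃ x ∈ I, ∃ y ∈ I, x ≠ y)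
    (F : List ↥I → ℝ) (hSt : VStandard F) :
    (VPreassoc F ∧ VUnQRI F ∧
        Continuous (fun a : ↥I => F [a]) ∧
        Function.Injective (fun a : ↥I => F [a]) ∧
        Continuous (fun p : ↥I × ↥I => F [p.1, p.2]) ∧
        (∀ a : ↥I, Function.Injective fun b : ↥I => F [a, b]) ∧
        (∀ b : ↥I, Function.Injective fun a : ↥I => F [a, b]))
    ↔
    ∃ (J : Set ℝ) (φ : ↥I → ℝ) (ψ : ℝ → ℝ),
      ((∃ b : ℝ, b ≤ 0 ∧ J = Set.Iio b) ∨ (∃ b : ℝ, b ≤ 0 ∧ J = Set.Iic b) ∨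
        (∃ a : ℝ, 0 ≤ a ∧ J = Set.Ioi a) ∨ (∃ a : ℝ, 0 ≤ a ∧ J = Set.Ici a) ∨
        J = Set.univ) ∧
      Continuous φ ∧ StrictMono φ ∧ Set.range φ = J ∧
      ContinuousOn ψ J ∧ (StrictMonoOn ψ J ∨ StrictAntiOn ψ J) ∧
      (∀ l : List ↥I, l ≠ [] → F l = ψ (l.map φ).sum) ∧
      (∀ a : ↥I, ψ (φ a) = F [a]) := by
  obtain ⟨x, hx, y, hy, hxy⟩ := hne
  have : Inhabited I := ⟨⟨x, hx⟩⟩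
  have : Nontrivial I := ⟨⟨x, hx⟩, ⟨y, hy⟩, fun h => hxy (congrArg Subtype.val h)⟩
  have : PreconnectedSpace I := Subtype.preconnectedSpace hconn.isPreconnected
  constructor
  · rintro ⟨hPre, hQRI, hc₁, hi₁, hc₂, hi₂r, hi₂l⟩
    obtain ⟨J, φ, ψ, h⟩ := exists_quasiSumRep hPre hQRI hc₁ hi₁ hc₂ hi₂r hi₂l
    exact ⟨J, φ, ψ, h.isAddClosedInterval, h.continuous_inner, h.strictMono_inner, h.range_inner,
      h.continuousOn_outer, h.strictMonoOn_outer, h.apply_eq, h.outer_inner⟩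
  · rintro ⟨J, φ, ψ, h₁, h₂, h₃, h₄, h₅, h₆, h₇, h₈⟩
    have h : QuasiSumRep F J φ ψ := ⟨h₁, h₂, h₃, h₄, h₅, h₆, h₇, h₈⟩
    exact ⟨h.vPreassoc hSt, h.vUnQRI, h.continuous_unary, h.injective_unary, h.continuous_binary,
      h.injective_binary_right, h.injective_binary_left⟩
end

section
/- Let F : [0,1]* → ℝ be a standard function whose unary part F₁ is strictly increasing. Then F is preassociative and unarily quasi-range-idempotent, and its binary part F₂ is symmetric, nondecreasing in each argument, and satisfies F₂(1, x) = F₁(x) for every x ∈ [0,1], if and only if there exist a strictly increasing function f : [0,1] → ℝ and a variadic t-norm H : [0,1]* → [0,1] ∪ {ε} such that F^♭ = f ∘ H^♭. In this case f = F₁. -/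
/-! Variadic functions on tuples (modeled as lists). -/

variable {X Y Y' : Type*}

/-- A *variadic t-norm*: an associative ε-standard operation on `[0,1]` whose unary
part is the identity and whose binary part is a t-norm. -/
def IsVariadicTnorm (H : List ↥unitInterval → Option ↥unitInterval) : Prop :=
  VEpsStandard H ∧ VAssoc H ∧ (∀ a : ↥unitInterval, H [a] = some a) ∧
  ∃ T : ↥unitInterval → ↥unitInterval → ↥unitInterval,
    (∀ a b : ↥unitInterval, H [a, b] = some (T a b)) ∧
    (∀ a : ↥unitInterval, Monotone (T a)) ∧
    (∀ b : ↥unitInterval, Monotone fun a => T a b) ∧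
    (∀ a b : ↥unitInterval, T a b = T b a) ∧
    (∀ a b c : ↥unitInterval, T (T a b) c = T a (T b c)) ∧
    (∀ a : ↥unitInterval, T 1 a = a)

theorem stmt14 (F : List ↥unitInterval → ℝ) (hSt : VStandard F)
    (h1 : StrictMono fun a : ↥unitInterval => F [a]) :
    ((VPreassoc F ∧ VUnQRI F ∧
        (∀ a b : ↥unitInterval, F [a, b] = F [b, a]) ∧
        (∀ a : ↥unitInterval, Monotone fun b : ↥unitInterval => F [a, b]) ∧
        (∀ b : ↥unitInterval, Monotone fun a : ↥unitInterval => F [a, b]) ∧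
        (∀ a : ↥unitInterval, F [1, a] = F [a]))
      ↔
      ∃ (f : ↥unitInterval → ℝ) (H : List ↥unitInterval → Option ↥unitInterval),
        StrictMono f ∧ IsVariadicTnorm H ∧
          ∀ x : List ↥unitInterval, x ≠ [] →
            ∃ a : ↥unitInterval, H x = some a ∧ F x = f a)
    ∧
    -- in this case f = F₁
    (∀ (f : ↥unitInterval → ℝ) (H : List ↥unitInterval → Option ↥unitInterval),
      StrictMono f → IsVariadicTnorm H →
      (∀ x : List ↥unitInterval, x ≠ [] →
        ∃ a : ↥unitInterval, H x = some a ∧ F x = f a) →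
      f = fun a : ↥unitInterval => F [a]) := by
  classical
  have hinj : Function.Injective fun a : ↥unitInterval => F [a] := h1.injective
  constructor
  · constructor
    · rintro ⟨hPre, hQRI, hSym, hMonR, hMonL, hUnit⟩
      have hex : ∀ x : List ↥unitInterval, x ≠ [] → ∃ a, F [a] = F x := by
        intro x hx
        have hmem : F x ∈ VRanFlat F := ⟨x, hx, rfl⟩
        rw [← hQRI] at hmem
        exact hmem
      set g : List ↥unitInterval → ↥unitInterval := fun x =>
        if h : x ≠ [] then Classical.choose (hex x h) else 1 with hg
      have hgF : ∀ x : List ↥unitInterval, x ≠ [] → F [g x] = F x := by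
        intro x hx
        simp only [hg, dif_pos hx]
        exact Classical.choose_spec (hex x hx)
      have hgid : ∀ a : ↥unitInterval, g [a] = a := by
        intro a
        exact hinj (hgF [a] (by simp))
      set H : List ↥unitInterval → Option ↥unitInterval := fun x =>
        if x = [] then none else some (g x) with hH
      have hHval : ∀ x : List ↥unitInterval, x ≠ [] → H x = some (g x) := by
        intro x hx; simp [hH, hx]
      refine ⟨fun a => F [a], H, h1, ?_, ?_⟩
      · refine ⟨⟨?_, by simp [hH]⟩, ?_, ?_, fun a b => g [a, b], ?_, ?_, ?_, ?_, ?_, ?_⟩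
        · -- VStandard H
          intro x hx
          by_contra hne
          rw [hHval x hne] at hx
          simp [hH] at hx
        · -- VAssoc H
          intro x y z
          by_cases hy : y = []
          · subst hy; simp [hH]
          · rw [hHval y hy]
            have hy2 : x ++ y ++ z ≠ [] := by simp [hy]
            have hy3 : x ++ (some (g y)).toList ++ z ≠ [] := by simp
            rw [hHval _ hy2, hHval _ hy3]
            have hFeq : F (x ++ y ++ z) = F (x ++ [g y] ++ z) :=
              (hPre x y [g y] z (hgF y hy).symm)
            have : F [g (x ++ y ++ z)] = F [g (x ++ (some (g y)).toList ++ z)] := by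
              rw [hgF _ hy2, hgF _ hy3]
              simpa using hFeq
            exact congrArg some (hinj this)
        · -- unary identity
          intro a
          rw [hHval [a] (by simp), hgid a]
        · -- binary part
          intro a b
          exact hHval [a, b] (by simp)
        · -- monotone right
          intro a b b' hbb'
          have h2 : F [g [a, b]] ≤ F [g [a, b']] := by
            rw [hgF [a, b] (by simp), hgF [a, b'] (by simp)]
            exact hMonR a hbb'
          exact h1.le_iff_le.mp h2
        · -- monotone left
          intro b a a' haa'
          have h2 : F [g [a, b]] ≤ F [g [a', b]] := by
            rw [hgF [a, b] (by simp), hgF [a', b] (by simp)]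
            exact hMonL b haa'
          exact h1.le_iff_le.mp h2
        · -- symmetric
          intro a b
          apply hinj
          show F [g [a, b]] = F [g [b, a]]
          rw [hgF [a, b] (by simp), hgF [b, a] (by simp)]
          exact hSym a b
        · -- associative
          intro a b c
          apply hinj
          show F [g [g [a, b], c]] = F [g [a, g [b, c]]]
          rw [hgF [g [a, b], c] (by simp), hgF [a, g [b, c]] (by simp)]
          have e1 : F [g [a, b], c] = F [a, b, c] := by
            have := hPre [] [g [a, b]] [a, b] [c] (hgF [a, b] (by simp))
            simpa using this
          have e2 : F [a, g [b, c]] = F [a, b, c] := by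
            have := hPre [a] [g [b, c]] [b, c] [] (hgF [b, c] (by simp))
            simpa using this
          rw [e1, e2]
        · -- unit
          intro a
          apply hinj
          show F [g [1, a]] = F [a]
          rw [hgF [1, a] (by simp)]
          exact hUnit a
      · intro x hx
        exact ⟨g x, hHval x hx, (hgF x hx).symm⟩
    · rintro ⟨f, H, hf, ⟨⟨hHst, hHeps⟩, hHassoc, hHid, T, hT, hTmr, hTml, hTsym, hTassoc, hTunit⟩, hFH⟩
      have hFa : ∀ a : ↥unitInterval, F [a] = f a := by
        intro a
        obtain ⟨a', h1', h2'⟩ := hFH [a] (by simp)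
        rw [hHid a] at h1'
        rw [h2', Option.some_inj.mp h1']
      have hFab : ∀ a b : ↥unitInterval, F [a, b] = f (T a b) := by
        intro a b
        obtain ⟨c, h1', h2'⟩ := hFH [a, b] (by simp)
        rw [hT a b] at h1'
        rw [h2', Option.some_inj.mp h1'.symm]
      refine ⟨?_, ?_, ?_, ?_, ?_, ?_⟩
      · -- preassociativity
        intro x y y' z hyy'
        by_cases hy : y = []
        · subst hy
          by_cases hy' : y' = []
          · subst hy'; rfl
          · exact absurd (hSt y' hyy'.symm) hy'
        · by_cases hy' : y' = []
          · subst hy'; exact absurd (hSt y hyy') hy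
          · obtain ⟨a, ha1, ha2⟩ := hFH y hy
            obtain ⟨a', ha1', ha2'⟩ := hFH y' hy'
            have haa : a = a' := hf.injective (by rw [← ha2, ← ha2', hyy'])
            have hHyy : H y = H y' := by rw [ha1, ha1', haa]
            have hne1 : x ++ y ++ z ≠ [] := by simp [hy]
            have hne2 : x ++ y' ++ z ≠ [] := by simp [hy']
            obtain ⟨b, hb1, hb2⟩ := hFH _ hne1
            obtain ⟨b', hb1', hb2'⟩ := hFH _ hne2
            have : H (x ++ y ++ z) = H (x ++ y' ++ z) := by
              rw [hHassoc x y z, hHassoc x y' z, hHyy]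
            have hbb : some b = some b' := by rw [← hb1, ← hb1', this]
            rw [hb2, hb2', Option.some_inj.mp hbb]
      · -- VUnQRI
        ext r
        constructor
        · rintro ⟨a, ha⟩
          exact ⟨[a], by simp, ha⟩
        · rintro ⟨x, hx, hFx⟩
          obtain ⟨a, _, ha2⟩ := hFH x hx
          exact ⟨a, by show F [a] = r; rw [hFa a, ← ha2, hFx]⟩
      · intro a b
        rw [hFab a b, hFab b a, hTsym a b]
      · intro a b b' hbb'
        simp only
        rw [hFab a b, hFab a b']
        exact hf.monotone (hTmr a hbb')
      · intro b a a' haa'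
        simp only
        rw [hFab a b, hFab a' b]
        exact hf.monotone (hTml b haa')
      · intro a
        rw [hFab 1 a, hTunit a, hFa a]
  · rintro f H hf ⟨_, _, hHid, _⟩ hFH
    funext a
    obtain ⟨a', h1', h2'⟩ := hFH [a] (by simp)
    rw [hHid a] at h1'
    show f a = F [a]
    rw [h2', Option.some_inj.mp h1']
end

section
/- Let F : X* → X ∪ {ε} be an ε-standard operation. The following are equivalent: (i) F is associative and range-idempotent; (ii) F is associative and F(F(x), F(x)) = F(x) for every x ∈ X; (iii) F is preassociative, unarily quasi-range-idempotent, and range-idempotent; (iv) F is preassociative, unarily quasi-range-idempotent, and satisfies F₁ ∘ F₁ = F₁ and F(F(x), F(x)) = F(x) for every x ∈ X. -/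
/-! Variadic functions on tuples (modeled as lists). -/

variable {X Y Y' : Type*}

section Helpers

variable (F : List X → Option X)

lemma vne_none (hF : VEpsStandard F) {x : List X} (hx : x ≠ []) : ∃ a, F x = some a := by
  cases h : F x with
  | none => exact absurd (hF.1 x (h.trans hF.2.symm)) hx
  | some a => exact ⟨a, rfl⟩

lemma vassoc_fix (hA : VAssoc F) (x : List X) : F (F x).toList = F x := by
  have := hA [] x []
  simpa using this.symm

lemma vassoc_preassoc (hA : VAssoc F) : VPreassoc F := by
  intro x y y' z h
  rw [hA x y z, h, ← hA x y' z]

lemma vassoc_unqri (hF : VEpsStandard F) (hA : VAssoc F) : VUnQRI F := by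
  ext y
  constructor
  · rintro ⟨a, rfl⟩
    exact ⟨[a], by simp, rfl⟩
  · rintro ⟨x, hx, rfl⟩
    obtain ⟨a, ha⟩ := vne_none F hF hx
    refine ⟨a, ?_⟩
    have h := vassoc_fix F hA x
    rw [ha] at h ⊢
    simpa using h

lemma vto_assoc (hF : VEpsStandard F) (hP : VPreassoc F)
    (hfix : ∀ a : X, some a ∈ VRanFlat F → F [a] = some a) : VAssoc F := by
  intro x y z
  rcases eq_or_ne y [] with rfl | hy
  · simp [hF.2]
  · obtain ⟨a, ha⟩ := vne_none F hF hy
    have h1 : F [a] = some a := hfix a ⟨y, hy, ha⟩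
    have h := hP x y [a] z (by rw [ha, h1])
    rw [h, ha]
    rfl

lemma vto_ri (hF : VEpsStandard F) (hA : VAssoc F)
    (h2 : ∀ x : X, F ((F [x]).toList ++ (F [x]).toList) = F [x]) : VRangeIdem F := by
  intro y hy k hk
  obtain ⟨x, hx, hFx⟩ := hy
  have h1 : F [y] = some y := by
    have h := vassoc_fix F hA x
    rw [hFx] at h; simpa using h
  have h2' : F [y, y] = some y := by
    have h := h2 y
    rw [h1] at h
    simpa using h
  have key : ∀ n : ℕ, F (List.replicate (n + 1) y) = some y := by
    intro n
    induction n with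
    | zero => simpa using h1
    | succ m ih =>
      have e : List.replicate (m + 1 + 1) y = [y] ++ List.replicate (m + 1) y ++ [] := by
        simp [List.replicate_succ]
      rw [e, hA [y] (List.replicate (m + 1) y) [], ih]
      simpa using h2'
  obtain ⟨n, rfl⟩ : ∃ n, k = n + 1 := ⟨k - 1, (Nat.succ_pred_eq_of_pos hk).symm⟩
  exact key n

end Helpers

theorem stmt16 [Nonempty X] (F : List X → Option X) (hF : VEpsStandard F) :
    -- (i) ↔ (ii)
    ((VAssoc F ∧ VRangeIdem F) ↔
      (VAssoc F ∧ ∀ x : X, F ((F [x]).toList ++ (F [x]).toList) = F [x]))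
    ∧
    -- (i) ↔ (iii)
    ((VAssoc F ∧ VRangeIdem F) ↔
      (VPreassoc F ∧ VUnQRI F ∧ VRangeIdem F))
    ∧
    -- (i) ↔ (iv)
    ((VAssoc F ∧ VRangeIdem F) ↔
      (VPreassoc F ∧ VUnQRI F ∧ (∀ a : X, F (F [a]).toList = F [a]) ∧
        ∀ x : X, F ((F [x]).toList ++ (F [x]).toList) = F [x])) := by
  -- the binary condition from (i)
  have bin : (VAssoc F ∧ VRangeIdem F) →
      ∀ x : X, F ((F [x]).toList ++ (F [x]).toList) = F [x] := by
    rintro ⟨hA, hRI⟩ x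
    obtain ⟨a, ha⟩ := vne_none F hF (by simp : ([x] : List X) ≠ [])
    have hmem : some a ∈ VRanFlat F := ⟨[x], by simp, ha⟩
    have h2 := hRI a hmem 2 (by norm_num)
    rw [ha]
    simpa using h2
  have fix1 : (VAssoc F ∧ VRangeIdem F) → ∀ a : X, F (F [a]).toList = F [a] := by
    rintro ⟨hA, hRI⟩ a
    exact vassoc_fix F hA [a]
  refine ⟨⟨fun h => ⟨h.1, bin h⟩, fun ⟨hA, h2⟩ => ⟨hA, vto_ri F hF hA h2⟩⟩, ?_, ?_⟩
  · constructor
    · rintro ⟨hA, hRI⟩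
      exact ⟨vassoc_preassoc F hA, vassoc_unqri F hF hA, hRI⟩
    · rintro ⟨hP, hQ, hRI⟩
      have hfix : ∀ a : X, some a ∈ VRanFlat F → F [a] = some a := by
        intro a hmem
        simpa using hRI a hmem 1 le_rfl
      exact ⟨vto_assoc F hF hP hfix, hRI⟩
  · constructor
    · rintro h
      exact ⟨vassoc_preassoc F h.1, vassoc_unqri F hF h.1, fix1 h, bin h⟩
    · rintro ⟨hP, hQ, h3, h4⟩
      have hfix : ∀ a : X, some a ∈ VRanFlat F → F [a] = some a := by
        intro a hmem
        rw [VUnQRI] at hQ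
        rw [← hQ] at hmem
        obtain ⟨b, hb⟩ := hmem
        simp only at hb
        have := h3 b
        rw [hb] at this
        simpa using this
      have hA := vto_assoc F hF hP hfix
      exact ⟨hA, vto_ri F hF hA h4⟩
end

section
/- Let H : X* → X ∪ {ε} be an ε-standard operation over a bounded chain X. The following are equivalent: (i) H is associative, H₂(H₁(x), H₁(x)) = H₁(x) for every x ∈ X, H₁ and H₂ are nondecreasing in each argument, and the sets ran(H₁), H₂(X, z), and H₂(z, X) are order-convex for every z ∈ X; (ii) H is associative and range-idempotent, and for every n ≥ 1, Hₙ is nondecreasing in each argument and the set Hₙ(y, X, z) = {Hₙ(y, t, z) : t ∈ X} is order-convex for every pair of tuples (y, z) with |y| + |z| = n − 1; (iii) there exist a, b, c, d ∈ X with a ≤ c ∧ d and c ∨ d ≤ b such that Hₙ(x₁, …, xₙ) = med(a, (c ∧ x₁) ∨ med(⋀ᵢ xᵢ, c ∧ d, ⋁ᵢ xᵢ) ∨ (d ∧ xₙ), b) for every n ≥ 1. -/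
/-! Variadic functions on tuples (modeled as lists). -/

variable {X Y Y' : Type*}

/-- The inner n-ary formula: `Phi a b c d p M J q` where `p` is the first coordinate,
`M` the min, `J` the max, `q` the last coordinate. -/
def PhiF {Z : Type*} [LinearOrder Z] (a b c d p M J q : Z) : Z :=
  med3 a (max (max (min c p) (med3 M (min c d) J)) (min d q)) b

/-- The binary formula. -/
def FbinF {Z : Type*} [LinearOrder Z] (a b c d x y : Z) : Z :=
  PhiF a b c d x (min x y) (max x y) y

section BoolTransfer
variable {X : Type*} [LinearOrder X]

def bmap (w : X) : X → Bool := fun u => decide (¬ u ≤ w)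

lemma bmap_mono (w : X) : Monotone (bmap w) := by
  intro u v huv
  by_cases h : v ≤ w
  · have h2 : u ≤ w := huv.trans h
    simp [bmap, h, h2]
  · simp [bmap, h]

lemma eq_of_bmap {u v : X} (h : ∀ w, bmap w u = bmap w v) : u = v := by
  have h1 := h u
  have h2 := h v
  simp only [bmap, decide_eq_decide] at h1 h2
  refine le_antisymm ?_ ?_
  · by_contra hc; exact h2.1 hc le_rfl
  · by_contra hc; exact h1.2 hc le_rfl

lemma le_of_bmap {u v : X} (h : ∀ w, bmap w u ≤ bmap w v) : u ≤ v := by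
  have h2 := h v
  by_contra hc
  have e1 : bmap v u = true := by simp [bmap, hc]
  have e2 : bmap v v = false := by simp [bmap]
  rw [e1, e2] at h2
  exact absurd h2 (by simp)

variable {Y : Type*} [LinearOrder Y] {φ : X → Y} (hm : Monotone φ)

include hm

lemma map_med3 (x y z : X) : φ (med3 x y z) = med3 (φ x) (φ y) (φ z) := by
  simp only [med3, hm.map_min, hm.map_max]

lemma map_PhiF (a b c d p M J q : X) :
    φ (PhiF a b c d p M J q) = PhiF (φ a) (φ b) (φ c) (φ d) (φ p) (φ M) (φ J) (φ q) := by
  simp only [PhiF, map_med3 hm, hm.map_min, hm.map_max]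

lemma map_FbinF (a b c d x y : X) :
    φ (FbinF a b c d x y) = FbinF (φ a) (φ b) (φ c) (φ d) (φ x) (φ y) := by
  simp only [FbinF, map_PhiF hm, hm.map_min, hm.map_max]

end BoolTransfer

section Bash
variable {Z : Type*} [LinearOrder Z]

private lemma bL0_bool : ∀ a b c d x : Bool, a ≤ c → a ≤ d → c ≤ b → d ≤ b →
    PhiF a b c d x x x x = med3 a x b := by decide

lemma bL0 (a b c d x : Z) (hac : a ≤ c) (had : a ≤ d) (hcb : c ≤ b) (hdb : d ≤ b) :
    PhiF a b c d x x x x = med3 a x b := by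
  apply eq_of_bmap; intro w
  have hm := bmap_mono w
  simp only [map_PhiF hm, map_med3 hm]
  exact bL0_bool _ _ _ _ _ (hm hac) (hm had) (hm hcb) (hm hdb)

private lemma bL3_bool : ∀ a b c d x p q M J : Bool, a ≤ c → a ≤ d → c ≤ b → d ≤ b →
    M ≤ p → p ≤ J → M ≤ q → q ≤ J →
    FbinF a b c d x (PhiF a b c d p M J q) = PhiF a b c d x (min M x) (max J x) q := by decide

lemma bL3 (a b c d x p q M J : Z) (hac : a ≤ c) (had : a ≤ d) (hcb : c ≤ b) (hdb : d ≤ b)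
    (hMp : M ≤ p) (hpJ : p ≤ J) (hMq : M ≤ q) (hqJ : q ≤ J) :
    FbinF a b c d x (PhiF a b c d p M J q) = PhiF a b c d x (min M x) (max J x) q := by
  apply eq_of_bmap; intro w
  have hm := bmap_mono w
  simp only [map_PhiF hm, map_FbinF hm, hm.map_min, hm.map_max]
  exact bL3_bool _ _ _ _ _ _ _ _ _ (hm hac) (hm had) (hm hcb) (hm hdb) (hm hMp) (hm hpJ) (hm hMq) (hm hqJ)

private lemma bL1_bool : ∀ a b c d u v : Bool, a ≤ c → a ≤ d → c ≤ b → d ≤ b →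
    a ≤ v → v ≤ b → FbinF a b c d (med3 a u b) v = FbinF a b c d u v := by decide

lemma bL1 (a b c d u v : Z) (hac : a ≤ c) (had : a ≤ d) (hcb : c ≤ b) (hdb : d ≤ b)
    (hav : a ≤ v) (hvb : v ≤ b) : FbinF a b c d (med3 a u b) v = FbinF a b c d u v := by
  apply eq_of_bmap; intro w
  have hm := bmap_mono w
  simp only [map_FbinF hm, map_med3 hm]
  exact bL1_bool _ _ _ _ _ _ (hm hac) (hm had) (hm hcb) (hm hdb) (hm hav) (hm hvb)

private lemma bL2_bool : ∀ a b c d u v t : Bool, a ≤ c → a ≤ d → c ≤ b → d ≤ b →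
    a ≤ v → v ≤ b → a ≤ t → t ≤ b →
    FbinF a b c d (FbinF a b c d u v) t = FbinF a b c d u (FbinF a b c d v t) := by decide

lemma bL2 (a b c d u v t : Z) (hac : a ≤ c) (had : a ≤ d) (hcb : c ≤ b) (hdb : d ≤ b)
    (hav : a ≤ v) (hvb : v ≤ b) (hat : a ≤ t) (htb : t ≤ b) :
    FbinF a b c d (FbinF a b c d u v) t = FbinF a b c d u (FbinF a b c d v t) := by
  apply eq_of_bmap; intro w
  have hm := bmap_mono w
  simp only [map_FbinF hm]
  exact bL2_bool _ _ _ _ _ _ _ (hm hac) (hm had) (hm hcb) (hm hdb) (hm hav) (hm hvb) (hm hat) (hm htb)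

private lemma bIdem_bool : ∀ a b c d v : Bool, a ≤ c → a ≤ d → c ≤ b → d ≤ b →
    a ≤ v → v ≤ b → FbinF a b c d v v = v := by decide

lemma bIdem (a b c d v : Z) (hac : a ≤ c) (had : a ≤ d) (hcb : c ≤ b) (hdb : d ≤ b)
    (hav : a ≤ v) (hvb : v ≤ b) : FbinF a b c d v v = v := by
  apply eq_of_bmap; intro w
  have hm := bmap_mono w
  simp only [map_FbinF hm]
  exact bIdem_bool _ _ _ _ _ (hm hac) (hm had) (hm hcb) (hm hdb) (hm hav) (hm hvb)

private lemma bMedId_bool : ∀ a b v : Bool, a ≤ v → v ≤ b → med3 a v b = v := by decide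

lemma bMedId (a b v : Z) (hav : a ≤ v) (hvb : v ≤ b) : med3 a v b = v := by
  apply eq_of_bmap; intro w
  have hm := bmap_mono w
  simp only [map_med3 hm]
  exact bMedId_bool _ _ _ (hm hav) (hm hvb)

private lemma bMedLo_bool : ∀ a b v : Bool, v ≤ a → a ≤ b → med3 a v b = a := by decide

lemma bMedLo (a b v : Z) (hva : v ≤ a) (hab : a ≤ b) : med3 a v b = a := by
  apply eq_of_bmap; intro w
  have hm := bmap_mono w
  simp only [map_med3 hm]
  exact bMedLo_bool _ _ _ (hm hva) (hm hab)

private lemma bMedHi_bool : ∀ a b v : Bool, b ≤ v → a ≤ b → med3 a v b = b := by decide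

lemma bMedHi (a b v : Z) (hbv : b ≤ v) (hab : a ≤ b) : med3 a v b = b := by
  apply eq_of_bmap; intro w
  have hm := bmap_mono w
  simp only [map_med3 hm]
  exact bMedHi_bool _ _ _ (hm hbv) (hm hab)

private lemma bMedMemLo_bool : ∀ a b v : Bool, a ≤ b → a ≤ med3 a v b := by decide

lemma bMedMemLo (a b v : Z) (hab : a ≤ b) : a ≤ med3 a v b := by
  apply le_of_bmap; intro w
  have hm := bmap_mono w
  simp only [map_med3 hm]
  exact bMedMemLo_bool _ _ _ (hm hab)

private lemma bMedMemHi_bool : ∀ a b v : Bool, a ≤ b → med3 a v b ≤ b := by decide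

lemma bMedMemHi (a b v : Z) (hab : a ≤ b) : med3 a v b ≤ b := by
  apply le_of_bmap; intro w
  have hm := bmap_mono w
  simp only [map_med3 hm]
  exact bMedMemHi_bool _ _ _ (hm hab)

private lemma bMono1_bool : ∀ a b c d x x' y : Bool, x ≤ x' →
    FbinF a b c d x y ≤ FbinF a b c d x' y := by decide

lemma bMono1 (a b c d x x' y : Z) (h : x ≤ x') : FbinF a b c d x y ≤ FbinF a b c d x' y := by
  apply le_of_bmap; intro w
  have hm := bmap_mono w
  simp only [map_FbinF hm]
  exact bMono1_bool _ _ _ _ _ _ _ (hm h)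

private lemma bMono2_bool : ∀ a b c d x y y' : Bool, y ≤ y' →
    FbinF a b c d x y ≤ FbinF a b c d x y' := by decide

lemma bMono2 (a b c d x y y' : Z) (h : y ≤ y') : FbinF a b c d x y ≤ FbinF a b c d x y' := by
  apply le_of_bmap; intro w
  have hm := bmap_mono w
  simp only [map_FbinF hm]
  exact bMono2_bool _ _ _ _ _ _ _ (hm h)

private lemma bMedMono_bool : ∀ a b x y : Bool, x ≤ y → med3 a x b ≤ med3 a y b := by decide

lemma bMedMono (a b x y : Z) (h : x ≤ y) : med3 a x b ≤ med3 a y b := by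
  apply le_of_bmap; intro w
  have hm := bmap_mono w
  simp only [map_med3 hm]
  exact bMedMono_bool _ _ _ _ (hm h)

private lemma bL4_bool : ∀ a b c d x z l h : Bool, a ≤ c → a ≤ d → c ≤ b → d ≤ b →
    l ≤ a → b ≤ h → l ≤ x → x ≤ h → l ≤ z → z ≤ h →
    FbinF a b c d x z = med3 (FbinF a b c d l z) x (FbinF a b c d h z) := by decide

lemma bL4 (a b c d x z l h : Z) (hac : a ≤ c) (had : a ≤ d) (hcb : c ≤ b) (hdb : d ≤ b)
    (hla : l ≤ a) (hbh : b ≤ h) (hlx : l ≤ x) (hxh : x ≤ h) (hlz : l ≤ z) (hzh : z ≤ h) :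
    FbinF a b c d x z = med3 (FbinF a b c d l z) x (FbinF a b c d h z) := by
  apply eq_of_bmap; intro w
  have hm := bmap_mono w
  simp only [map_FbinF hm, map_med3 hm]
  exact bL4_bool _ _ _ _ _ _ _ _ (hm hac) (hm had) (hm hcb) (hm hdb) (hm hla) (hm hbh) (hm hlx) (hm hxh) (hm hlz) (hm hzh)

private lemma bL4'_bool : ∀ a b c d x z l h : Bool, a ≤ c → a ≤ d → c ≤ b → d ≤ b →
    l ≤ a → b ≤ h → l ≤ x → x ≤ h → l ≤ z → z ≤ h →
    FbinF a b c d z x = med3 (FbinF a b c d z l) x (FbinF a b c d z h) := by decide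

lemma bL4' (a b c d x z l h : Z) (hac : a ≤ c) (had : a ≤ d) (hcb : c ≤ b) (hdb : d ≤ b)
    (hla : l ≤ a) (hbh : b ≤ h) (hlx : l ≤ x) (hxh : x ≤ h) (hlz : l ≤ z) (hzh : z ≤ h) :
    FbinF a b c d z x = med3 (FbinF a b c d z l) x (FbinF a b c d z h) := by
  apply eq_of_bmap; intro w
  have hm := bmap_mono w
  simp only [map_FbinF hm, map_med3 hm]
  exact bL4'_bool _ _ _ _ _ _ _ _ (hm hac) (hm had) (hm hcb) (hm hdb) (hm hla) (hm hbh) (hm hlx) (hm hxh) (hm hlz) (hm hzh)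

private lemma bLmm_bool : ∀ d x y : Bool, x ≤ y → min (max x d) y = max x (min d y) := by decide

lemma bLmm (d x y : Z) (h : x ≤ y) : min (max x d) y = max x (min d y) := by
  apply eq_of_bmap; intro w
  have hm := bmap_mono w
  simp only [hm.map_min, hm.map_max]
  exact bLmm_bool _ _ _ (hm h)

private lemma bB1_bool : ∀ a b c d x y : Bool, a ≤ c → a ≤ d → c ≤ b → d ≤ b →
    med3 a x b ≤ med3 a y b →
    min (max (med3 a x b) d) (med3 a y b) = FbinF a b c d x y := by decide

lemma bB1 (a b c d x y : Z) (hac : a ≤ c) (had : a ≤ d) (hcb : c ≤ b) (hdb : d ≤ b)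
    (hxy : med3 a x b ≤ med3 a y b) :
    min (max (med3 a x b) d) (med3 a y b) = FbinF a b c d x y := by
  apply eq_of_bmap; intro w
  have hm := bmap_mono w
  simp only [map_FbinF hm, map_med3 hm, hm.map_min, hm.map_max]
  exact bB1_bool _ _ _ _ _ _ (hm hac) (hm had) (hm hcb) (hm hdb)
    (by simpa only [map_med3 hm] using hm hxy)

private lemma bB2_bool : ∀ a b c d x y : Bool, a ≤ c → a ≤ d → c ≤ b → d ≤ b →
    med3 a y b ≤ med3 a x b →
    min (max (med3 a y b) c) (med3 a x b) = FbinF a b c d x y := by decide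

lemma bB2 (a b c d x y : Z) (hac : a ≤ c) (had : a ≤ d) (hcb : c ≤ b) (hdb : d ≤ b)
    (hyx : med3 a y b ≤ med3 a x b) :
    min (max (med3 a y b) c) (med3 a x b) = FbinF a b c d x y := by
  apply eq_of_bmap; intro w
  have hm := bmap_mono w
  simp only [map_FbinF hm, map_med3 hm, hm.map_min, hm.map_max]
  exact bB2_bool _ _ _ _ _ _ (hm hac) (hm had) (hm hcb) (hm hdb)
    (by simpa only [map_med3 hm] using hm hyx)

/-- `Kval [x,y] = FbinF x y`. -/
lemma bPair (a b c d x y : Z) :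
    PhiF a b c d x (min y x) (max y x) y = FbinF a b c d x y := by
  rw [min_comm, max_comm]; rfl

end Bash



section ListFacts
variable {Z : Type*} [LinearOrder Z]

lemma foldr_min_swap : ∀ (l : List Z) (x y : Z),
    List.foldr min x (y :: l) = min x (List.foldr min y l) := by
  intro l
  induction l with
  | nil => intro x y; simp [min_comm]
  | cons z zs ih =>
    intro x y
    show min y (List.foldr min x (z :: zs)) = min x (List.foldr min y (z :: zs))
    rw [ih x z, ih y z]
    rw [← min_assoc, ← min_assoc, min_comm y x]

lemma foldr_max_swap : ∀ (l : List Z) (x y : Z),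
    List.foldr max x (y :: l) = max x (List.foldr max y l) := by
  intro l
  induction l with
  | nil => intro x y; simp [max_comm]
  | cons z zs ih =>
    intro x y
    show max y (List.foldr max x (z :: zs)) = max x (List.foldr max y (z :: zs))
    rw [ih x z, ih y z]
    rw [← max_assoc, ← max_assoc, max_comm y x]

lemma foldr_min_le : ∀ (l : List Z) (x z : Z), z ∈ x :: l → List.foldr min x l ≤ z := by
  intro l
  induction l with
  | nil =>
    intro x z hz
    simp at hz
    simp [hz]
  | cons u l' ih =>
    intro x z hz
    show min u (List.foldr min x l') ≤ z
    rcases List.mem_cons.1 hz with h | h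
    · rw [h]
      exact (min_le_right _ _).trans (ih x x (by simp))
    · rcases List.mem_cons.1 h with h' | h'
      · subst h'; exact min_le_left _ _
      · exact (min_le_right _ _).trans (ih x z (by simp [h']))

lemma le_foldr_max : ∀ (l : List Z) (x z : Z), z ∈ x :: l → z ≤ List.foldr max x l := by
  intro l
  induction l with
  | nil =>
    intro x z hz
    simp at hz
    simp [hz]
  | cons u l' ih =>
    intro x z hz
    show z ≤ max u (List.foldr max x l')
    rcases List.mem_cons.1 hz with h | h
    · rw [h]
      exact (ih x x (by simp)).trans (le_max_right _ _)
    · rcases List.mem_cons.1 h with h' | h'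
      · subst h'; exact le_max_left _ _
      · exact (ih x z (by simp [h'])).trans (le_max_right _ _)

end ListFacts

section Basic
variable {X : Type*} [LinearOrder X] [BoundedOrder X] {H : List X → Option X}

/-- value of `H` on nonempty lists -/
noncomputable def eH (H : List X → Option X) (l : List X) : X := (H l).getD ⊥

lemma hsome (hH : VEpsStandard H) (l : List X) (hl : l ≠ []) : H l = some (eH H l) := by
  cases hv : H l with
  | none => exact absurd (hH.1 l (hv.trans hH.2.symm)) hl
  | some v => simp [eH, hv]

lemma some_inj' {v w : X} (h : some v = some w) : v = w := Option.some.inj h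

end Basic

section Imp12
variable {X : Type*} [LinearOrder X] [BoundedOrder X] {H : List X → Option X}

/-- monotone map with order-connected range maps order-connected sets to order-connected sets -/
lemma image_ordConnected (f : X → X) (hf : Monotone f) (hr : Set.OrdConnected (Set.range f))
    (C : Set X) (hC : Set.OrdConnected C) : Set.OrdConnected (f '' C) := by
  constructor
  rintro v1 ⟨x1, hx1, rfl⟩ v2 ⟨x2, hx2, rfl⟩ v hv
  obtain ⟨x, hx⟩ : v ∈ Set.range f := hr.out ⟨x1, rfl⟩ ⟨x2, rfl⟩ hv
  rcases le_total x1 x2 with h12 | h12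
  · rcases le_total x x1 with h | h
    · have : f x ≤ f x1 := hf h
      have : v = f x1 := le_antisymm (hx ▸ this) hv.1
      exact ⟨x1, hx1, this.symm⟩
    · rcases le_total x x2 with h' | h'
      · exact ⟨x, hC.out hx1 hx2 ⟨h, h'⟩, hx⟩
      · have : f x2 ≤ f x := hf h'
        have : v = f x2 := le_antisymm hv.2 (hx ▸ this)
        exact ⟨x2, hx2, this.symm⟩
  · have : f x2 ≤ f x1 := hf h12
    have hv1 : v = f x1 := le_antisymm (hv.2.trans this) hv.1
    exact ⟨x1, hx1, hv1.symm⟩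

variable (hH : VEpsStandard H) (hA : VAssoc H)

include hH hA

/-- collapse a nonempty prefix-with-t to its value -/
lemma mid_collapse (y z : List X) (t : X) :
    H (y ++ t :: z) = H (eH H (y ++ [t]) :: z) := by
  have h := hA [] (y ++ [t]) z
  rw [hsome hH (y ++ [t]) (by simp)] at h
  simpa using h

lemma cons_collapse (x : X) (l : List X) (hl : l ≠ []) :
    H (x :: l) = H [x, eH H l] := by
  have h := hA [x] l []
  rw [hsome hH l hl] at h
  simpa using h

lemma front_mono
    (hm1 : ∀ x y c d : X, x ≤ y → H [x] = some c → H [y] = some d → c ≤ d)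
    (hm2b : ∀ z x y c d : X, x ≤ y → H [z, x] = some c → H [z, y] = some d → c ≤ d) :
    ∀ (y : List X) (t t' : X), t ≤ t' → eH H (y ++ [t]) ≤ eH H (y ++ [t']) := by
  intro y
  induction y with
  | nil =>
    intro t t' htt
    exact hm1 t t' _ _ htt (hsome hH [t] (by simp)) (hsome hH [t'] (by simp))
  | cons u y1 ih =>
    intro t t' htt
    have e1 : H ((u :: y1) ++ [t]) = H [u, eH H (y1 ++ [t])] := by
      simpa using cons_collapse hH hA u (y1 ++ [t]) (by simp)
    have e2 : H ((u :: y1) ++ [t']) = H [u, eH H (y1 ++ [t'])] := by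
      simpa using cons_collapse hH hA u (y1 ++ [t']) (by simp)
    refine hm2b u _ _ _ _ (ih t t' htt) ?_ ?_
    · rw [← e1]; exact hsome hH _ (by simp)
    · rw [← e2]; exact hsome hH _ (by simp)

lemma mid_mono
    (hm1 : ∀ x y c d : X, x ≤ y → H [x] = some c → H [y] = some d → c ≤ d)
    (hm2a : ∀ z x y c d : X, x ≤ y → H [x, z] = some c → H [y, z] = some d → c ≤ d)
    (hm2b : ∀ z x y c d : X, x ≤ y → H [z, x] = some c → H [z, y] = some d → c ≤ d) :
    ∀ (y z : List X) (t t' c d : X), t ≤ t' →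
      H (y ++ t :: z) = some c → H (y ++ t' :: z) = some d → c ≤ d := by
  intro y z t t' c d htt hc hd
  rw [mid_collapse hH hA] at hc hd
  have hw := front_mono hH hA hm1 hm2b y t t' htt
  cases z with
  | nil => exact hm1 _ _ _ _ hw hc hd
  | cons u z1 =>
    rw [cons_collapse hH hA _ (u :: z1) (by simp)] at hc hd
    exact hm2a _ _ _ _ _ hw hc hd

lemma mid_conv
    (hm1 : ∀ x y c d : X, x ≤ y → H [x] = some c → H [y] = some d → c ≤ d)
    (hm2b : ∀ z x y c d : X, x ≤ y → H [z, x] = some c → H [z, y] = some d → c ≤ d)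
    (hC1 : Set.OrdConnected {c : X | ∃ x : X, H [x] = some c})
    (hC2a : ∀ z : X, Set.OrdConnected {c : X | ∃ x : X, H [x, z] = some c})
    (hC2b : ∀ z : X, Set.OrdConnected {c : X | ∃ x : X, H [z, x] = some c}) :
    ∀ y z : List X, Set.OrdConnected {c : X | ∃ t : X, H (y ++ t :: z) = some c} := by
  intro y
  induction y with
  | nil =>
    intro z
    cases z with
    | nil => simpa using hC1
    | cons u z1 =>
      have hset : {c : X | ∃ t : X, H ([] ++ t :: u :: z1) = some c}
          = {c : X | ∃ t : X, H [t, eH H (u :: z1)] = some c} := by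
        ext v
        constructor
        · rintro ⟨t, ht⟩
          refine ⟨t, ?_⟩
          rw [← cons_collapse hH hA t (u :: z1) (by simp)]
          simpa using ht
        · rintro ⟨t, ht⟩
          refine ⟨t, ?_⟩
          rw [show ([] ++ t :: u :: z1 : List X) = t :: u :: z1 by simp,
            cons_collapse hH hA t (u :: z1) (by simp)]
          exact ht
      rw [hset]
      exact hC2a _
  | cons u y1 ih =>
    intro z
    have hmono : Monotone (fun x => eH H [u, x]) := by
      intro s s' hss
      exact hm2b u s s' _ _ hss (hsome hH [u, s] (by simp)) (hsome hH [u, s'] (by simp))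
    have hrange : Set.range (fun x => eH H [u, x]) = {c : X | ∃ x : X, H [u, x] = some c} := by
      ext v
      constructor
      · rintro ⟨x, rfl⟩
        exact ⟨x, hsome hH [u, x] (by simp)⟩
      · rintro ⟨x, hx⟩
        exact ⟨x, some_inj' ((hsome hH [u, x] (by simp)).symm.trans hx)⟩
    have hset : {c : X | ∃ t : X, H ((u :: y1) ++ t :: z) = some c}
        = (fun x => eH H [u, x]) '' {c : X | ∃ t : X, H (y1 ++ t :: z) = some c} := by
      ext v
      constructor
      · rintro ⟨t, ht⟩
        refine ⟨eH H (y1 ++ t :: z), ⟨t, hsome hH _ (by simp)⟩, ?_⟩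
        have := cons_collapse hH hA u (y1 ++ t :: z) (by simp)
        rw [show ((u :: y1) ++ t :: z : List X) = u :: (y1 ++ t :: z) by simp, this] at ht
        exact some_inj' ((hsome hH [u, eH H (y1 ++ t :: z)] (by simp)).symm.trans ht)
      · rintro ⟨s, ⟨t, ht⟩, rfl⟩
        refine ⟨t, ?_⟩
        have hs : eH H (y1 ++ t :: z) = s := some_inj' ((hsome hH _ (by simp)).symm.trans ht)
        rw [show ((u :: y1) ++ t :: z : List X) = u :: (y1 ++ t :: z) by simp,
          cons_collapse hH hA u (y1 ++ t :: z) (by simp), hs]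
        exact hsome hH _ (by simp)
    rw [hset]
    exact image_ordConnected _ hmono (hrange ▸ hC2b u) _ (ih z)

lemma range_idem_of
    (hII : ∀ x c : X, H [x] = some c → H [c, c] = some c) :
    VRangeIdem H := by
  intro v hv k hk
  obtain ⟨l, hl, hlv⟩ := hv
  have h1 : H [v] = some v := by
    have h := hA [] l []
    simp only [List.nil_append, List.append_nil] at h
    rw [hlv] at h
    simpa using h.symm
  have h2 : H [v, v] = some v := hII v v h1
  have key : ∀ m : ℕ, H (List.replicate (m + 1) v) = some v := by
    intro m
    induction m with
    | zero => simpa using h1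
    | succ n ihn =>
      have h := hA [] [v, v] (List.replicate n v)
      rw [h2] at h
      have e1 : ([] ++ [v, v] ++ List.replicate n v : List X)
          = List.replicate (n + 1 + 1) v := by
        simp [List.replicate_succ]
      have e2 : ([] ++ [v] ++ List.replicate n v : List X) = List.replicate (n + 1) v := by
        simp [List.replicate_succ]
      rw [e1, Option.toList_some, e2] at h
      rw [h, ihn]
  obtain ⟨m, rfl⟩ : ∃ m, k = m + 1 := ⟨k - 1, by omega⟩
  exact key m

end Imp12

section Imp23
variable {X : Type*} [LinearOrder X] [BoundedOrder X] {H : List X → Option X}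

lemma imp23 (hH : VEpsStandard H) (hA : VAssoc H) (hRI : VRangeIdem H)
    (hMn : ∀ (y z : List X) (t t' c d : X), t ≤ t' →
      H (y ++ t :: z) = some c → H (y ++ t' :: z) = some d → c ≤ d)
    (hCn : ∀ y z : List X, Set.OrdConnected {c : X | ∃ t : X, H (y ++ t :: z) = some c}) :
    ∃ a b c d : X, a ≤ min c d ∧ max c d ≤ b ∧
      ∀ (x : X) (xs : List X), H (x :: xs) = some (PhiF a b c d x (xs.foldr min x)
        (xs.foldr max x) ((x :: xs).getLast (List.cons_ne_nil x xs))) := by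
  classical
  set a : X := eH H [⊥] with ha_def
  set b : X := eH H [⊤] with hb_def
  set c : X := eH H [⊤, ⊥] with hc_def
  set d : X := eH H [⊥, ⊤] with hd_def
  -- basic fixes from range idempotence
  have hfixv : ∀ (v : X) (l : List X), l ≠ [] → H l = some v → H [v] = some v := by
    intro v l hl hlv
    have h := hRI v ⟨l, hl, hlv⟩ 1 le_rfl
    simpa using h
  have hgvvgen : ∀ (v : X) (l : List X), l ≠ [] → H l = some v → H [v, v] = some v := by
    intro v l hl hlv
    have h := hRI v ⟨l, hl, hlv⟩ 2 (by norm_num)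
    simpa [List.replicate] using h
  -- monotonicity instances
  have hmono1 : ∀ x y vx vy : X, x ≤ y → H [x] = some vx → H [y] = some vy → vx ≤ vy :=
    fun x y vx vy h hx hy => hMn [] [] x y vx vy h (by simpa using hx) (by simpa using hy)
  have hgmono1 : ∀ z x y vx vy : X, x ≤ y → H [x, z] = some vx → H [y, z] = some vy → vx ≤ vy :=
    fun z x y vx vy h hx hy => hMn [] [z] x y vx vy h (by simpa using hx) (by simpa using hy)
  have hgmono2 : ∀ z x y vx vy : X, x ≤ y → H [z, x] = some vx → H [z, y] = some vy → vx ≤ vy :=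
    fun z x y vx vy h hx hy => hMn [z] [] x y vx vy h (by simpa using hx) (by simpa using hy)
  have hA0 : H [(⊥ : X)] = some a := hsome hH _ (by simp)
  have hB0 : H [(⊤ : X)] = some b := hsome hH _ (by simp)
  have hfmono : ∀ x y : X, x ≤ y → eH H [x] ≤ eH H [y] :=
    fun x y h => hmono1 x y _ _ h (hsome hH [x] (by simp)) (hsome hH [y] (by simp))
  have haleb : ∀ x : X, a ≤ eH H [x] ∧ eH H [x] ≤ b :=
    fun x => ⟨hfmono ⊥ x bot_le, hfmono x ⊤ le_top⟩
  have hab : a ≤ b := (haleb ⊥).2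
  have hvmem : ∀ (v : X) (l : List X), l ≠ [] → H l = some v → a ≤ v ∧ v ≤ b := by
    intro v l hl hlv
    have h1 := hfixv v l hl hlv
    have h2 : eH H [v] = v := some_inj' ((hsome hH [v] (by simp)).symm.trans h1)
    exact ⟨h2 ▸ (haleb v).1, h2 ▸ (haleb v).2⟩
  have hranIcc : ∀ v : X, a ≤ v → v ≤ b → ∃ u, H [u] = some v := by
    intro v hav hvb
    have hc' := hCn [] []
    have hmem : v ∈ {c : X | ∃ t : X, H ([] ++ t :: []) = some c} :=
      hc'.out ⟨⊥, by simpa using hA0⟩ ⟨⊤, by simpa using hB0⟩ ⟨hav, hvb⟩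
    obtain ⟨u, hu⟩ := hmem
    exact ⟨u, by simpa using hu⟩
  have hclampfix : ∀ v : X, a ≤ v → v ≤ b → H [v] = some v := by
    intro v h1 h2
    obtain ⟨u, hu⟩ := hranIcc v h1 h2
    exact hfixv v [u] (by simp) hu
  have hdiag : ∀ v : X, a ≤ v → v ≤ b → H [v, v] = some v :=
    fun v h1 h2 => hgvvgen v [v] (by simp) (hclampfix v h1 h2)
  have hfmed : ∀ x : X, H [x] = some (med3 a x b) := by
    intro x
    have hafix : H [a] = some a := hclampfix a le_rfl hab
    have hbfix : H [b] = some b := hclampfix b hab le_rfl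
    rcases le_total x a with h | h
    · have h1 : eH H [x] ≤ a := hmono1 x a _ _ h (hsome hH [x] (by simp)) hafix
      have h2 : a ≤ eH H [x] := (haleb x).1
      rw [bMedLo a b x h hab, hsome hH [x] (by simp), le_antisymm h1 h2]
    · rcases le_total b x with h' | h'
      · have h1 : b ≤ eH H [x] := hmono1 b x _ _ h' hbfix (hsome hH [x] (by simp))
        have h2 : eH H [x] ≤ b := (haleb x).2
        rw [bMedHi a b x h' hab, hsome hH [x] (by simp), le_antisymm h2 h1]
      · rw [bMedId a b x h h']
        exact hclampfix x h h'
  -- pair collapses (associativity)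
  have hpairLR : ∀ x y x' y' : X, H [x] = some x' → H [y] = some y' →
      H [x, y] = H [x', y'] := by
    intro x y x' y' hx hy
    have h1 := hA [] [x] [y]
    rw [hx] at h1
    simp only [List.nil_append, Option.toList_some, List.singleton_append,
      List.cons_append, List.nil_append] at h1
    have h2 := hA [x'] [y] []
    rw [hy] at h2
    simp only [List.append_nil, Option.toList_some, List.singleton_append,
      List.cons_append, List.nil_append] at h2
    exact h1.trans h2
  have hgassoc : ∀ x y z v w : X, H [x, y] = some v → H [y, z] = some w →
      H [v, z] = H [x, w] := by
    intro x y z v w hv hw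
    have h1 := hA [] [x, y] [z]
    rw [hv] at h1
    simp only [List.nil_append, Option.toList_some, List.singleton_append,
      List.cons_append] at h1
    have h2 := hA [x] [y, z] []
    rw [hw] at h2
    simp only [List.append_nil, Option.toList_some, List.singleton_append,
      List.cons_append, List.nil_append] at h2
    exact h1.symm.trans h2
  -- c, d values
  have hd : H [a, b] = some d := by
    have h0 : H [(⊥ : X), ⊤] = some d := hsome hH _ (by simp)
    have hmb : H [(⊥ : X)] = some a := hA0
    have := hpairLR ⊥ ⊤ a b hA0 (by rw [hB0])
    rw [← this]
    exact h0
  have hc : H [b, a] = some c := by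
    have h0 : H [(⊤ : X), ⊥] = some c := hsome hH _ (by simp)
    have := hpairLR ⊤ ⊥ b a hB0 hA0
    rw [← this]
    exact h0
  have hcmem : a ≤ c ∧ c ≤ b := hvmem c [⊤, ⊥] (by simp) (hsome hH _ (by simp))
  have hdmem : a ≤ d ∧ d ≤ b := hvmem d [⊥, ⊤] (by simp) (hsome hH _ (by simp))
  obtain ⟨hac, hcb⟩ := hcmem
  obtain ⟨had, hdb⟩ := hdmem
  have haa : H [a, a] = some a := hdiag a le_rfl hab
  have hbb : H [b, b] = some b := hdiag b hab le_rfl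
  -- sections
  have hSecR : ∀ z : X, Set.OrdConnected {v : X | ∃ t, H [t, z] = some v} := by
    intro z
    have := hCn [] [z]
    simpa using this
  have hSecL : ∀ z : X, Set.OrdConnected {v : X | ∃ t, H [z, t] = some v} := by
    intro z
    have := hCn [z] []
    simpa using this
  -- derived equalities
  have hdb2 : H [d, b] = some d := (hgassoc a b b d b hd hbb).trans hd
  have had2 : H [a, d] = some d := (hgassoc a a b a d haa hd).symm.trans hd
  have hca2 : H [c, a] = some c := (hgassoc b a a c a hc haa).trans hc
  have hbc2 : H [b, c] = some c := (hgassoc b b a b c hbb hc).symm.trans hc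
  -- boundary sections
  have hB1 : ∀ x : X, a ≤ x → x ≤ b → H [x, b] = some (max x d) := by
    intro x hax hxb
    have hx : H [x, b] = some (eH H [x, b]) := hsome hH _ (by simp)
    rcases le_total x d with h | h
    · have h1 : eH H [x, b] ≤ d := hgmono1 b x d _ _ h hx hdb2
      have h2 : d ≤ eH H [x, b] := hgmono1 b a x _ _ hax hd hx
      rw [max_eq_right h, hx, le_antisymm h1 h2]
    · obtain ⟨w, hw⟩ : x ∈ {v : X | ∃ t, H [t, b] = some v} :=
        (hSecR b).out ⟨a, hd⟩ ⟨b, hbb⟩ ⟨h, hxb⟩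
      rw [max_eq_left h, hgassoc w b b x b hw hbb, hw]
  have hB2 : ∀ y : X, a ≤ y → y ≤ b → H [a, y] = some (min y d) := by
    intro y hay hyb
    have hy : H [a, y] = some (eH H [a, y]) := hsome hH _ (by simp)
    rcases le_total y d with h | h
    · obtain ⟨w, hw⟩ : y ∈ {v : X | ∃ t, H [a, t] = some v} :=
        (hSecL a).out ⟨a, haa⟩ ⟨b, hd⟩ ⟨hay, h⟩
      rw [min_eq_left h, ← hgassoc a a w a y haa hw, hw]
    · have h1 : d ≤ eH H [a, y] := hgmono2 a d y _ _ h had2 hy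
      have h2 : eH H [a, y] ≤ d := hgmono2 a y b _ _ hyb hy hd
      rw [min_eq_right h, hy, le_antisymm h2 h1]
  have hB3 : ∀ x : X, a ≤ x → x ≤ b → H [x, a] = some (min x c) := by
    intro x hax hxb
    have hx : H [x, a] = some (eH H [x, a]) := hsome hH _ (by simp)
    rcases le_total x c with h | h
    · obtain ⟨w, hw⟩ : x ∈ {v : X | ∃ t, H [t, a] = some v} :=
        (hSecR a).out ⟨a, haa⟩ ⟨b, hc⟩ ⟨hax, h⟩
      rw [min_eq_left h, hgassoc w a a x a hw haa, hw]
    · have h1 : c ≤ eH H [x, a] := hgmono1 a c x _ _ h hca2 hx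
      have h2 : eH H [x, a] ≤ c := hgmono1 a x b _ _ hxb hx hc
      rw [min_eq_right h, hx, le_antisymm h2 h1]
  have hB4 : ∀ y : X, a ≤ y → y ≤ b → H [b, y] = some (max y c) := by
    intro y hay hyb
    have hy : H [b, y] = some (eH H [b, y]) := hsome hH _ (by simp)
    rcases le_total c y with h | h
    · obtain ⟨w, hw⟩ : y ∈ {v : X | ∃ t, H [b, t] = some v} :=
        (hSecL b).out ⟨a, hc⟩ ⟨b, hbb⟩ ⟨h, hyb⟩
      rw [max_eq_left h, ← hgassoc b b w b y hbb hw, hw]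
    · have h1 : c ≤ eH H [b, y] := hgmono2 b a y _ _ hay hc hy
      have h2 : eH H [b, y] ≤ c := hgmono2 b y c _ _ h hy hbc2
      rw [max_eq_right h, hy, le_antisymm h2 h1]
  -- main binary values on the interval
  have hMainLe : ∀ x y : X, a ≤ x → x ≤ b → a ≤ y → y ≤ b → x ≤ y →
      H [x, y] = some (min (max x d) y) := by
    intro x y hax hxb hay hyb hxy
    have hv : H [x, y] = some (eH H [x, y]) := hsome hH _ (by simp)
    have up1 : eH H [x, y] ≤ max x d := hgmono2 x y b _ _ hyb hv (hB1 x hax hxb)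
    have up2 : eH H [x, y] ≤ y := hgmono1 y x y _ _ hxy hv (hdiag y hay hyb)
    have lo1 : x ≤ eH H [x, y] := hgmono2 x x y _ _ hxy (hdiag x hax hxb) hv
    have lo2 : min y d ≤ eH H [x, y] := hgmono1 y a x _ _ hax (hB2 y hay hyb) hv
    rw [hv]
    congr 1
    refine le_antisymm (le_min up1 up2) ?_
    rw [bLmm d x y hxy]
    exact max_le lo1 (by rwa [min_comm] at lo2)
  have hMainGe : ∀ x y : X, a ≤ x → x ≤ b → a ≤ y → y ≤ b → y ≤ x →
      H [x, y] = some (min (max y c) x) := by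
    intro x y hax hxb hay hyb hyx
    have hv : H [x, y] = some (eH H [x, y]) := hsome hH _ (by simp)
    have up1 : eH H [x, y] ≤ x := hgmono2 x y x _ _ hyx hv (hdiag x hax hxb)
    have up2 : eH H [x, y] ≤ max y c := hgmono1 y x b _ _ hxb hv (hB4 y hay hyb)
    have lo1 : y ≤ eH H [x, y] := hgmono1 y y x _ _ hyx (hdiag y hay hyb) hv
    have lo2 : min x c ≤ eH H [x, y] := hgmono2 x a y _ _ hay (hB3 x hax hxb) hv
    rw [hv]
    congr 1
    refine le_antisymm (le_min up2 up1) ?_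
    rw [bLmm c y x hyx]
    exact max_le lo1 (by rwa [min_comm] at lo2)
  -- the full binary formula
  have hFbin : ∀ x y : X, H [x, y] = some (FbinF a b c d x y) := by
    intro x y
    have hpair := hpairLR x y _ _ (hfmed x) (hfmed y)
    have hx1 := bMedMemLo a b x hab
    have hx2 := bMedMemHi a b x hab
    have hy1 := bMedMemLo a b y hab
    have hy2 := bMedMemHi a b y hab
    rcases le_total (med3 a x b) (med3 a y b) with h | h
    · rw [hpair, hMainLe _ _ hx1 hx2 hy1 hy2 h, bB1 a b c d x y hac had hcb hdb h]
    · rw [hpair, hMainGe _ _ hx1 hx2 hy1 hy2 h, bB2 a b c d x y hac had hcb hdb h]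
  refine ⟨a, b, c, d, le_min hac had, max_le hcb hdb, ?_⟩
  intro x xs
  induction xs generalizing x with
  | nil =>
    have h0 : H [x] = some (med3 a x b) := hfmed x
    have : PhiF a b c d x (List.foldr min x []) (List.foldr max x [])
        (([x] : List X).getLast (List.cons_ne_nil x [])) = med3 a x b := by
      simp only [List.foldr_nil, List.getLast_singleton]
      exact bL0 a b c d x hac had hcb hdb
    rw [this]
    exact h0
  | cons y ys ih =>
    have hyys := ih y
    have hev : eH H (y :: ys) = PhiF a b c d y (ys.foldr min y) (ys.foldr max y)
        ((y :: ys).getLast (List.cons_ne_nil y ys)) :=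
      some_inj' ((hsome hH _ (by simp)).symm.trans hyys)
    have hcons := cons_collapse hH hA x (y :: ys) (by simp)
    have hq_mem : (y :: ys).getLast (List.cons_ne_nil y ys) ∈ y :: ys := List.getLast_mem _
    have hMy : List.foldr min y ys ≤ y := foldr_min_le ys y y (by simp)
    have hyJ : y ≤ List.foldr max y ys := le_foldr_max ys y y (by simp)
    have hMq : List.foldr min y ys ≤ (y :: ys).getLast (List.cons_ne_nil y ys) :=
      foldr_min_le ys y _ hq_mem
    have hqJ : (y :: ys).getLast (List.cons_ne_nil y ys) ≤ List.foldr max y ys :=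
      le_foldr_max ys y _ hq_mem
    have key : H (x :: y :: ys) = some (PhiF a b c d x
        (min (List.foldr min y ys) x) (max (List.foldr max y ys) x)
        ((y :: ys).getLast (List.cons_ne_nil y ys))) := by
      rw [hcons, hFbin x (eH H (y :: ys)), hev,
        bL3 a b c d x y _ _ _ hac had hcb hdb hMy hyJ hMq hqJ]
    rw [key]
    congr 1
    rw [foldr_min_swap ys x y, foldr_max_swap ys x y,
      min_comm x (List.foldr min y ys), max_comm x (List.foldr max y ys)]
    congr 1

end Imp23

section Kval
variable {Z : Type*} [LinearOrder Z]

def Kval (a b c d : Z) : List Z → Z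
  | [] => a
  | x :: xs => PhiF a b c d x (xs.foldr min x) (xs.foldr max x)
      ((x :: xs).getLast (List.cons_ne_nil x xs))

variable (a b c d : Z) (hac : a ≤ c) (had : a ≤ d) (hcb : c ≤ b) (hdb : d ≤ b)

include hac had hcb hdb

lemma Ksingle (x : Z) : Kval a b c d [x] = med3 a x b := by
  show PhiF a b c d x (List.foldr min x []) (List.foldr max x [])
      (([x] : List Z).getLast (List.cons_ne_nil x [])) = med3 a x b
  simp only [List.foldr_nil, List.getLast_singleton]
  exact bL0 a b c d x hac had hcb hdb

lemma Krange (l : List Z) : a ≤ Kval a b c d l ∧ Kval a b c d l ≤ b := by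
  have hab : a ≤ b := hac.trans hcb
  cases l with
  | nil => exact ⟨le_rfl, hab⟩
  | cons x xs =>
    exact ⟨bMedMemLo a b _ hab, bMedMemHi a b _ hab⟩

lemma Kcons (x y : Z) (ys : List Z) :
    Kval a b c d (x :: y :: ys) = FbinF a b c d x (Kval a b c d (y :: ys)) := by
  have hq_mem : (y :: ys).getLast (List.cons_ne_nil y ys) ∈ y :: ys := List.getLast_mem _
  have hMy : List.foldr min y ys ≤ y := foldr_min_le ys y y (by simp)
  have hyJ : y ≤ List.foldr max y ys := le_foldr_max ys y y (by simp)
  have hMq : List.foldr min y ys ≤ (y :: ys).getLast (List.cons_ne_nil y ys) :=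
    foldr_min_le ys y _ hq_mem
  have hqJ : (y :: ys).getLast (List.cons_ne_nil y ys) ≤ List.foldr max y ys :=
    le_foldr_max ys y _ hq_mem
  have h := bL3 a b c d x y ((y :: ys).getLast (List.cons_ne_nil y ys))
    (List.foldr min y ys) (List.foldr max y ys) hac had hcb hdb hMy hyJ hMq hqJ
  show PhiF a b c d x (List.foldr min x (y :: ys)) (List.foldr max x (y :: ys))
      ((x :: y :: ys).getLast (List.cons_ne_nil x (y :: ys))) = _
  rw [foldr_min_swap ys x y, foldr_max_swap ys x y,
    min_comm x (List.foldr min y ys), max_comm x (List.foldr max y ys)]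
  rw [show (x :: y :: ys).getLast (List.cons_ne_nil x (y :: ys))
      = (y :: ys).getLast (List.cons_ne_nil y ys) from List.getLast_cons (List.cons_ne_nil y ys)]
  exact h.symm

lemma Kpair (x y : Z) : Kval a b c d [x, y] = FbinF a b c d x y := by
  show PhiF a b c d x (min y x) (max y x) y = FbinF a b c d x y
  exact bPair a b c d x y

lemma Kappend : ∀ (y z : List Z), y ≠ [] → z ≠ [] →
    Kval a b c d (y ++ z) = FbinF a b c d (Kval a b c d y) (Kval a b c d z) := by
  intro y
  induction y with
  | nil => intro z hy hz; exact absurd rfl hy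
  | cons u ys ih =>
    intro z _ hz
    cases ys with
    | nil =>
      obtain ⟨v, zs, rfl⟩ := List.exists_cons_of_ne_nil hz
      rw [show ([u] ++ v :: zs : List Z) = u :: v :: zs from rfl,
        Kcons a b c d hac had hcb hdb u v zs, Ksingle a b c d hac had hcb hdb u]
      exact (bL1 a b c d u (Kval a b c d (v :: zs)) hac had hcb hdb
        (Krange a b c d hac had hcb hdb _).1 (Krange a b c d hac had hcb hdb _).2).symm
    | cons v ys' =>
      have e : ((u :: v :: ys') ++ z : List Z) = u :: ((v :: ys') ++ z) := rfl
      obtain ⟨w, ws, ew⟩ := List.exists_cons_of_ne_nil (show (v :: ys') ++ z ≠ [] by simp)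
      rw [e, ew, Kcons a b c d hac had hcb hdb u w ws, ← ew,
        ih z (by simp) hz,
        ← bL2 a b c d u (Kval a b c d (v :: ys')) (Kval a b c d z) hac had hcb hdb
          (Krange a b c d hac had hcb hdb _).1 (Krange a b c d hac had hcb hdb _).2
          (Krange a b c d hac had hcb hdb _).1 (Krange a b c d hac had hcb hdb _).2,
        ← Kcons a b c d hac had hcb hdb u v ys']

lemma Kassoc : ∀ (x y z : List Z), y ≠ [] →
    Kval a b c d (x ++ y ++ z) = Kval a b c d (x ++ Kval a b c d y :: z) := by
  intro x y z hy
  induction x with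
  | nil =>
    simp only [List.nil_append]
    cases z with
    | nil =>
      rw [List.append_nil]
      rw [Ksingle a b c d hac had hcb hdb (Kval a b c d y)]
      exact (bMedId a b _ (Krange a b c d hac had hcb hdb y).1 (Krange a b c d hac had hcb hdb y).2).symm
    | cons w zs =>
      rw [Kappend a b c d hac had hcb hdb y (w :: zs) hy (by simp),
        Kcons a b c d hac had hcb hdb (Kval a b c d y) w zs]
  | cons u x' IH =>
    have e1 : ((u :: x') ++ y ++ z : List Z) = u :: (x' ++ y ++ z) := by simp
    have e2 : ((u :: x') ++ Kval a b c d y :: z : List Z)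
        = u :: (x' ++ Kval a b c d y :: z) := by simp
    obtain ⟨v1, l1, ev1⟩ := List.exists_cons_of_ne_nil
      (show x' ++ y ++ z ≠ [] by simp [hy])
    obtain ⟨v2, l2, ev2⟩ := List.exists_cons_of_ne_nil
      (show x' ++ Kval a b c d y :: z ≠ [] by simp)
    rw [e1, e2, ev1, Kcons a b c d hac had hcb hdb u v1 l1, ← ev1, IH,
      ev2, Kcons a b c d hac had hcb hdb u v2 l2, ← ev2]

end Kval

section Imp31
variable {X : Type*} [LinearOrder X] [BoundedOrder X]

lemma imp31 (H : List X → Option X) (hH : VEpsStandard H)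
    (a b c d : X) (hacd : a ≤ min c d) (hcdb : max c d ≤ b)
    (hform : ∀ (x : X) (xs : List X), H (x :: xs) = some (PhiF a b c d x (xs.foldr min x)
      (xs.foldr max x) ((x :: xs).getLast (List.cons_ne_nil x xs)))) :
    VAssoc H ∧
      (∀ x c : X, H [x] = some c → H [c, c] = some c) ∧
      (∀ x y c d : X, x ≤ y → H [x] = some c → H [y] = some d → c ≤ d) ∧
      (∀ z x y c d : X, x ≤ y → H [x, z] = some c → H [y, z] = some d → c ≤ d) ∧
      (∀ z x y c d : X, x ≤ y → H [z, x] = some c → H [z, y] = some d → c ≤ d) ∧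
      Set.OrdConnected {c : X | ∃ x : X, H [x] = some c} ∧
      (∀ z : X, Set.OrdConnected {c : X | ∃ x : X, H [x, z] = some c}) ∧
      (∀ z : X, Set.OrdConnected {c : X | ∃ x : X, H [z, x] = some c}) := by
  have hac : a ≤ c := hacd.trans (min_le_left c d)
  have had : a ≤ d := hacd.trans (min_le_right c d)
  have hcb : c ≤ b := (le_max_left c d).trans hcdb
  have hdb : d ≤ b := (le_max_right c d).trans hcdb
  have hab : a ≤ b := hac.trans hcb
  have hK : ∀ l : List X, l ≠ [] → H l = some (Kval a b c d l) := by
    intro l hl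
    cases l with
    | nil => exact absurd rfl hl
    | cons x xs => exact hform x xs
  have hKs : ∀ x : X, H [x] = some (med3 a x b) := by
    intro x
    rw [hK [x] (by simp), Ksingle a b c d hac had hcb hdb x]
  have hKp : ∀ x y : X, H [x, y] = some (FbinF a b c d x y) := by
    intro x y
    rw [hK [x, y] (by simp), Kpair a b c d hac had hcb hdb x y]
  refine ⟨?_, ?_, ?_, ?_, ?_, ?_, ?_, ?_⟩
  · -- VAssoc
    intro x y z
    cases y with
    | nil => simp [hH.2]
    | cons u ys =>
      rw [hK (u :: ys) (by simp), Option.toList_some]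
      have e : (x ++ [Kval a b c d (u :: ys)] ++ z : List X)
          = x ++ Kval a b c d (u :: ys) :: z := by simp
      rw [e, hK (x ++ (u :: ys) ++ z) (by simp),
        hK (x ++ Kval a b c d (u :: ys) :: z) (by simp)]
      exact congrArg some (Kassoc a b c d hac had hcb hdb x (u :: ys) z (by simp))
  · -- idempotency of H1 values
    intro x c0 hx
    have hc0 : c0 = med3 a x b := some_inj' (hx.symm.trans (hKs x))
    have h1 : a ≤ c0 := hc0 ▸ bMedMemLo a b x hab
    have h2 : c0 ≤ b := hc0 ▸ bMedMemHi a b x hab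
    rw [hKp c0 c0, bIdem a b c d c0 hac had hcb hdb h1 h2]
  · -- unary monotone
    intro x y c0 d0 hxy hx hy
    have hc0 : c0 = med3 a x b := some_inj' (hx.symm.trans (hKs x))
    have hd0 : d0 = med3 a y b := some_inj' (hy.symm.trans (hKs y))
    rw [hc0, hd0]
    exact bMedMono a b x y hxy
  · -- binary monotone, first arg
    intro z x y c0 d0 hxy hx hy
    have hc0 : c0 = FbinF a b c d x z := some_inj' (hx.symm.trans (hKp x z))
    have hd0 : d0 = FbinF a b c d y z := some_inj' (hy.symm.trans (hKp y z))
    rw [hc0, hd0]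
    exact bMono1 a b c d x y z hxy
  · -- binary monotone, second arg
    intro z x y c0 d0 hxy hx hy
    have hc0 : c0 = FbinF a b c d z x := some_inj' (hx.symm.trans (hKp z x))
    have hd0 : d0 = FbinF a b c d z y := some_inj' (hy.symm.trans (hKp z y))
    rw [hc0, hd0]
    exact bMono2 a b c d z x y hxy
  · -- unary range order-convex
    have hset : {c0 : X | ∃ x : X, H [x] = some c0} = Set.Icc a b := by
      ext v
      constructor
      · rintro ⟨x, hx⟩
        have : v = med3 a x b := some_inj' (hx.symm.trans (hKs x))
        exact ⟨this ▸ bMedMemLo a b x hab, this ▸ bMedMemHi a b x hab⟩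
      · rintro ⟨h1, h2⟩
        exact ⟨v, by rw [hKs v, bMedId a b v h1 h2]⟩
    rw [hset]
    exact Set.ordConnected_Icc
  · -- right sections order-convex
    intro z
    have hlohi : FbinF a b c d ⊥ z ≤ FbinF a b c d ⊤ z := bMono1 a b c d ⊥ ⊤ z bot_le
    have hset : {c0 : X | ∃ x : X, H [x, z] = some c0}
        = Set.Icc (FbinF a b c d ⊥ z) (FbinF a b c d ⊤ z) := by
      ext v
      constructor
      · rintro ⟨x, hx⟩
        have hv : v = FbinF a b c d x z := some_inj' (hx.symm.trans (hKp x z))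
        have e := bL4 a b c d x z ⊥ ⊤ hac had hcb hdb bot_le le_top bot_le le_top bot_le le_top
        rw [hv, e]
        exact ⟨bMedMemLo _ _ _ hlohi, bMedMemHi _ _ _ hlohi⟩
      · rintro ⟨h1, h2⟩
        refine ⟨v, ?_⟩
        rw [hKp v z, bL4 a b c d v z ⊥ ⊤ hac had hcb hdb bot_le le_top bot_le le_top bot_le le_top,
          bMedId _ _ _ h1 h2]
    rw [hset]
    exact Set.ordConnected_Icc
  · -- left sections order-convex
    intro z
    have hlohi : FbinF a b c d z ⊥ ≤ FbinF a b c d z ⊤ := bMono2 a b c d z ⊥ ⊤ bot_le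
    have hset : {c0 : X | ∃ x : X, H [z, x] = some c0}
        = Set.Icc (FbinF a b c d z ⊥) (FbinF a b c d z ⊤) := by
      ext v
      constructor
      · rintro ⟨x, hx⟩
        have hv : v = FbinF a b c d z x := some_inj' (hx.symm.trans (hKp z x))
        have e := bL4' a b c d x z ⊥ ⊤ hac had hcb hdb bot_le le_top bot_le le_top bot_le le_top
        rw [hv, e]
        exact ⟨bMedMemLo _ _ _ hlohi, bMedMemHi _ _ _ hlohi⟩
      · rintro ⟨h1, h2⟩
        refine ⟨v, ?_⟩
        rw [hKp z v, bL4' a b c d v z ⊥ ⊤ hac had hcb hdb bot_le le_top bot_le le_top bot_le le_top,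
          bMedId _ _ _ h1 h2]
    rw [hset]
    exact Set.ordConnected_Icc

end Imp31

theorem stmt17 {X : Type*} [LinearOrder X] [BoundedOrder X]
    (H : List X → Option X) (hH : VEpsStandard H) :
    -- (i) ↔ (ii)
    ((VAssoc H ∧
        (∀ x c : X, H [x] = some c → H [c, c] = some c) ∧
        (∀ x y c d : X, x ≤ y → H [x] = some c → H [y] = some d → c ≤ d) ∧
        (∀ z x y c d : X, x ≤ y → H [x, z] = some c → H [y, z] = some d → c ≤ d) ∧
        (∀ z x y c d : X, x ≤ y → H [z, x] = some c → H [z, y] = some d → c ≤ d) ∧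
        Set.OrdConnected {c : X | ∃ x : X, H [x] = some c} ∧
        (∀ z : X, Set.OrdConnected {c : X | ∃ x : X, H [x, z] = some c}) ∧
        (∀ z : X, Set.OrdConnected {c : X | ∃ x : X, H [z, x] = some c}))
      ↔
      (VAssoc H ∧ VRangeIdem H ∧
        (∀ (y z : List X) (t t' c d : X), t ≤ t' →
          H (y ++ t :: z) = some c → H (y ++ t' :: z) = some d → c ≤ d) ∧
        (∀ y z : List X,
          Set.OrdConnected {c : X | ∃ t : X, H (y ++ t :: z) = some c})))
    ∧
    -- (ii) ↔ (iii)
    ((VAssoc H ∧ VRangeIdem H ∧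
        (∀ (y z : List X) (t t' c d : X), t ≤ t' →
          H (y ++ t :: z) = some c → H (y ++ t' :: z) = some d → c ≤ d) ∧
        (∀ y z : List X,
          Set.OrdConnected {c : X | ∃ t : X, H (y ++ t :: z) = some c}))
      ↔
      (∃ a b c d : X, a ≤ min c d ∧ max c d ≤ b ∧
        ∀ (x : X) (xs : List X),
          H (x :: xs) = some (med3 a
            (max (max (min c x)
              (med3 (xs.foldr min x) (min c d) (xs.foldr max x)))
              (min d ((x :: xs).getLast (List.cons_ne_nil x xs)))) b))) := by
  constructor
  · constructor
    · rintro ⟨hA, hII, hM1, hM2a, hM2b, hC1, hC2a, hC2b⟩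
      exact ⟨hA, range_idem_of hH hA hII,
        mid_mono hH hA hM1 hM2a hM2b,
        mid_conv hH hA hM1 hM2b hC1 hC2a hC2b⟩
    · rintro ⟨hA, hRI, hMn, hCn⟩
      refine ⟨hA, ?_, ?_, ?_, ?_, ?_, ?_, ?_⟩
      · intro x c0 hx
        have hmem : some c0 ∈ VRanFlat H := ⟨[x], by simp, hx⟩
        have h2 := hRI c0 hmem 2 (by norm_num)
        simpa [List.replicate] using h2
      · exact fun x y c0 d0 h hx hy =>
          hMn [] [] x y c0 d0 h (by simpa using hx) (by simpa using hy)
      · exact fun z x y c0 d0 h hx hy =>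
          hMn [] [z] x y c0 d0 h (by simpa using hx) (by simpa using hy)
      · exact fun z x y c0 d0 h hx hy =>
          hMn [z] [] x y c0 d0 h (by simpa using hx) (by simpa using hy)
      · simpa using hCn [] []
      · exact fun z => by simpa using hCn [] [z]
      · exact fun z => by simpa using hCn [z] []
  · constructor
    · rintro ⟨hA, hRI, hMn, hCn⟩
      obtain ⟨a, b, c, d, h1, h2, h3⟩ := imp23 hH hA hRI hMn hCn
      exact ⟨a, b, c, d, h1, h2, h3⟩
    · rintro ⟨a, b, c, d, h1, h2, h3⟩
      obtain ⟨hA, hII, hM1, hM2a, hM2b, hC1, hC2a, hC2b⟩ := imp31 H hH a b c d h1 h2 h3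
      exact ⟨hA, range_idem_of hH hA hII,
        mid_mono hH hA hM1 hM2a hM2b,
        mid_conv hH hA hM1 hM2b hC1 hC2a hC2b⟩
end
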